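/- arXiv:1012.3844 — 5 statements merged into one kernel-verified Lean document; each statement's English description precedes it below -/
import Mathlib

section
/- Let 0 < φ < 1, let f be the density of an absolutely continuous nonnegative random variable Z with distribution function F satisfying F(0) = 0, let v : [0,∞) → ℝ be locally bounded, and let m be the locally bounded solution of the defective renewal equation m(u) = φ ∫₀^u m(u−y) f(y) dy + v(u) for u ≥ 0. Assume F and v belong to C²₀([0,∞)). Then for all u > 0 one has m''(u) = φ ( ∫₀^u m'(u−y) f'(y) dy + m(0) f'(u) + m'(u) f(0) ) + v''(u), and lim_{u↓0} m''(u) = φ (v(0) f'(0) + m'(0) f(0)) + v''(0), where m'(0) = φ v(0) f(0) + v'(0). -/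
open MeasureTheory Filter Topology

/-!
Write `g ⋆ k` for `laplaceConv g k`, i.e. `(g ⋆ k)(x) = ∫₀ˣ g(s) k(x - s) ds`, extend `f` to a
`C¹` kernel `k` on `ℝ` and put `m̄ = m ∘ max 0`, so that `m = v + φ (m̄ ⋆ k)` on `[0, ∞)`. As the
integral is `0` wherever the integrand fails to be integrable, one first shows that `m` is
a.e.-measurable; then `m̄ ⋆ k` is continuous, hence so is `m`. The Leibniz rule
`(g ⋆ k)' = g k(0) + g ⋆ k'` for continuous `g` and `C¹` `k` gives `m' = v' + φ (m f(0) + m̄ ⋆ f')`,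
so `m` is `C¹` up to `0` and extends to a `C¹` function `mₑ` on `ℝ`. Since `m̄ ⋆ f' = f' ⋆ mₑ` on
`[0, ∞)`, the Leibniz rule applies once more and gives `m''`; the limits at `0` follow by
continuity, as `(g ⋆ k)(0) = 0`.
-/

open Set

noncomputable def laplaceConv (g k : ℝ → ℝ) (x : ℝ) : ℝ :=
  ∫ s in (0:ℝ)..x, g s * k (x - s)

section LaplaceConv

variable {g k : ℝ → ℝ}

theorem laplaceConv_comm (x : ℝ) : laplaceConv g k x = laplaceConv k g x := by
  have h := intervalIntegral.integral_comp_sub_left (a := 0) (b := x)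
    (fun s => k s * g (x - s)) x
  simp only [sub_sub_cancel, sub_self, sub_zero] at h
  simpa only [laplaceConv, mul_comm] using h

@[simp] theorem laplaceConv_zero : laplaceConv g k 0 = 0 :=
  intervalIntegral.integral_same

theorem intervalIntegral_mul_eq_laplaceConv {g₀ k₀ : ℝ → ℝ} (hg : EqOn g g₀ (Ioi 0))
    (hk : EqOn k k₀ (Ioi 0)) {u : ℝ} (hu : 0 ≤ u) :
    ∫ y in (0:ℝ)..u, g₀ (u - y) * k₀ y = laplaceConv k g u := by
  refine intervalIntegral.integral_congr_ae ?_
  filter_upwards [Measure.ae_ne volume u] with y hyu hy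
  rw [uIoc_of_le hu] at hy
  rw [hg (sub_pos.2 (lt_of_le_of_ne hy.2 hyu)), hk hy.1, mul_comm]

theorem measurable_laplaceConv (hg : Measurable g) (hk : Measurable k) :
    Measurable (laplaceConv g k) := by
  have hF : Measurable fun p : ℝ × ℝ => g p.2 * k (p.1 - p.2) := by fun_prop
  have hslice : ∀ A : Set (ℝ × ℝ), MeasurableSet A →
      Measurable fun x => ∫ s, A.indicator (fun p => g p.2 * k (p.1 - p.2)) (x, s) :=
    fun A hA => (hF.indicator hA).stronglyMeasurable.integral_prod_right'.measurable
  have hA₁ : MeasurableSet {p : ℝ × ℝ | 0 < p.2 ∧ p.2 ≤ p.1} :=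
    (measurableSet_lt measurable_const measurable_snd).inter
      (measurableSet_le measurable_snd measurable_fst)
  have hA₂ : MeasurableSet {p : ℝ × ℝ | p.1 < p.2 ∧ p.2 ≤ 0} :=
    (measurableSet_lt measurable_fst measurable_snd).inter
      (measurableSet_le measurable_snd measurable_const)
  convert (hslice _ hA₁).sub (hslice _ hA₂) using 1
  funext x
  rw [laplaceConv, intervalIntegral, ← integral_indicator measurableSet_Ioc,
    ← integral_indicator measurableSet_Ioc]
  rfl

theorem continuous_laplaceConv (hg : LocallyIntegrable g) (hk : Continuous k) :
    Continuous (laplaceConv g k) := by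
  rw [continuous_iff_continuousAt]
  intro x₀
  set R := |x₀| + 1
  have hR : 0 < R := by positivity
  obtain ⟨K, hK⟩ := isCompact_Icc.exists_bound_of_continuousOn
    (hk.continuousOn (s := Icc (-(2 * R)) (2 * R)))
  have h_bound : ∀ᶠ x in 𝓝 x₀, ∀ᵐ t ∂volume.restrict (uIoc (-R) R),
      ‖g t * k (x - t)‖ ≤ ‖g t‖ * K := by
    filter_upwards [Metric.ball_mem_nhds x₀ one_pos] with x hx
    refine ae_restrict_of_forall_mem measurableSet_uIoc fun t ht => ?_
    rw [uIoc_of_le (by linarith)] at ht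
    rw [Metric.mem_ball, Real.dist_eq, abs_lt] at hx
    rw [norm_mul]
    gcongr
    apply hK
    constructor <;> linarith [ht.1, ht.2, le_abs_self x₀, neg_abs_le x₀]
  have key := intervalIntegral.continuousAt_parametric_primitive_of_dominated
    (F := fun x t => g t * k (x - t)) (fun t => ‖g t‖ * K) (-R) R (a₀ := 0) (b₀ := x₀)
    (fun x => hg.aestronglyMeasurable.restrict.mul
      (hk.comp (continuous_const.sub continuous_id)).aestronglyMeasurable)
    h_bound ((hg.integrableOn_isCompact isCompact_uIcc).intervalIntegrable.norm.mul_const K)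
    (ae_of_all _ fun t =>
      (continuous_const.mul (hk.comp (continuous_id.sub continuous_const))).continuousAt)
    ⟨by linarith, hR⟩ ⟨by linarith [neg_abs_le x₀], by linarith [le_abs_self x₀]⟩
    Real.volume_singleton
  exact key.comp (f := fun x : ℝ => (x, x)) (continuousAt_id.prodMk continuousAt_id)

theorem tendsto_laplaceConv_nhdsGT_zero (hg : LocallyIntegrable g) (hk : Continuous k) :
    Tendsto (laplaceConv g k) (𝓝[>] 0) (𝓝 0) := by
  simpa using ((continuous_laplaceConv hg hk).tendsto 0).mono_left nhdsWithin_le_nhds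

theorem hasDerivAt_intervalIntegral_mul_comp_sub (hg : Continuous g) (hk : ContDiff ℝ 1 k)
    (a b u : ℝ) :
    HasDerivAt (fun x => ∫ s in a..b, g s * k (x - s)) (∫ s in a..b, g s * deriv k (u - s)) u := by
  have hk' : Continuous (deriv k) := hk.continuous_deriv le_rfl
  obtain ⟨C, hC⟩ := (isCompact_Icc.prod isCompact_uIcc).exists_bound_of_continuousOn
    (s := Icc (u - 1) (u + 1) ×ˢ uIcc a b)
    ((hg.comp continuous_snd).mul (hk'.comp (continuous_fst.sub continuous_snd))).continuousOn
  refine (intervalIntegral.hasDerivAt_integral_of_dominated_loc_of_deriv_le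
    (F' := fun x s => g s * deriv k (x - s)) (bound := fun _ => C)
    (Icc_mem_nhds (by linarith) (by linarith))
    (Eventually.of_forall fun x =>
      (hg.mul (hk.continuous.comp (continuous_const.sub continuous_id))).aestronglyMeasurable)
    ((hg.mul (hk.continuous.comp (continuous_const.sub continuous_id))).intervalIntegrable a b)
    ((hg.mul (hk'.comp (continuous_const.sub continuous_id))).aestronglyMeasurable)
    (ae_of_all _ fun s hs x hx => hC (x, s) ⟨hx, uIoc_subset_uIcc hs⟩)
    intervalIntegrable_const (ae_of_all _ fun s _ x _ => ?_)).2
  simpa using (((hk.differentiable one_ne_zero _).hasDerivAt).comp_sub_const x s).const_mul (g s)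

theorem isBigO_intervalIntegral_mul_comp_sub_sub (hg : Continuous g) (hk : ContDiff ℝ 1 k)
    (u : ℝ) :
    (fun x => ∫ s in u..x, g s * (k (x - s) - k (u - s))) =O[𝓝 u] fun x => ‖x - u‖ ^ 2 := by
  obtain ⟨Mg, hMg⟩ := isCompact_Icc.exists_bound_of_continuousOn
    (s := Icc (u - 1) (u + 1)) hg.continuousOn
  obtain ⟨L, hL⟩ := isCompact_Icc.exists_bound_of_continuousOn
    (s := Icc (-1 : ℝ) 1) (hk.continuous_deriv le_rfl).continuousOn
  refine Asymptotics.IsBigO.of_bound (Mg * L) ?_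
  filter_upwards [Icc_mem_nhds (show u - 1 < u by linarith) (show u < u + 1 by linarith)]
    with x hx
  have hbound : ∀ s ∈ uIoc u x, ‖g s * (k (x - s) - k (u - s))‖ ≤ Mg * (L * |x - u|) := by
    intro s hs
    have hs' := uIoc_subset_uIcc hs
    rw [mem_uIcc] at hs'
    have hmem : ∀ y, y ∈ uIcc u x → y - s ∈ Icc (-1 : ℝ) 1 := by
      intro y hy
      rw [mem_uIcc] at hy
      constructor <;> rcases hs' with h | h <;> rcases hy with h' | h' <;>
        linarith [hx.1, hx.2, h.1, h.2, h'.1, h'.2]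
    rw [norm_mul]
    refine mul_le_mul (hMg s ?_) ?_ (norm_nonneg _)
      ((norm_nonneg _).trans (hMg u ⟨by linarith, by linarith⟩))
    · rcases hs' with h | h <;> constructor <;> linarith [hx.1, hx.2, h.1, h.2]
    · simpa [Real.norm_eq_abs] using Convex.norm_image_sub_le_of_norm_hasDerivWithin_le
        (fun y _ => (hk.differentiable one_ne_zero y).hasDerivAt.hasDerivWithinAt) hL
        (convex_Icc (-1 : ℝ) 1) (hmem u left_mem_uIcc) (hmem x right_mem_uIcc)
  calc ‖∫ s in u..x, g s * (k (x - s) - k (u - s))‖ ≤ Mg * (L * |x - u|) * |x - u| :=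
        intervalIntegral.norm_integral_le_of_norm_le_const hbound
    _ = Mg * L * ‖‖x - u‖ ^ 2‖ := by rw [norm_pow, norm_norm, Real.norm_eq_abs]; ring

theorem hasDerivAt_laplaceConv (hg : Continuous g) (hk : ContDiff ℝ 1 k) (u : ℝ) :
    HasDerivAt (laplaceConv g k) (g u * k 0 + laplaceConv g (deriv k) u) u := by
  have hkc : Continuous k := hk.continuous
  have hint : ∀ x a b : ℝ, IntervalIntegrable (fun s => g s * k (x - s)) volume a b :=
    fun x a b => (by fun_prop : Continuous fun s => g s * k (x - s)).intervalIntegrable a b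
  have hsplit : laplaceConv g k = fun x => (∫ s in (0:ℝ)..u, g s * k (x - s))
      + (∫ s in u..x, g s * k (u - s)) + ∫ s in u..x, g s * (k (x - s) - k (u - s)) := by
    funext x
    rw [add_assoc, ← intervalIntegral.integral_add (hint u u x)
      ((by fun_prop : Continuous fun s => g s * (k (x - s) - k (u - s))).intervalIntegrable u x)]
    simp only [mul_sub, add_sub_cancel]
    exact (intervalIntegral.integral_add_adjacent_intervals (hint x 0 u) (hint x u x)).symm
  have hmoving : HasDerivAt (fun x => ∫ s in u..x, g s * k (u - s)) (g u * k 0) u := by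
    simpa using ((by fun_prop : Continuous fun s => g s * k (u - s)).integral_hasStrictDerivAt
      u u).hasDerivAt
  rw [hsplit]
  exact (((hasDerivAt_intervalIntegral_mul_comp_sub hg hk 0 u u).add hmoving).add
    (by simpa using ((isBigO_intervalIntegral_mul_comp_sub_sub hg hk u).hasFDerivAt
      one_lt_two).hasDerivAt)).congr_deriv (by rw [laplaceConv]; ring)

end LaplaceConv

theorem ContDiffOn.hasDerivAt_deriv_of_pos {n : WithTop ℕ∞} {g : ℝ → ℝ}
    (h : ContDiffOn ℝ n g (Ioi 0)) (hn : n ≠ 0) {x : ℝ} (hx : 0 < x) :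
    HasDerivAt g (deriv g x) x :=
  ((h.differentiableOn hn x hx).differentiableAt (Ioi_mem_nhds hx)).hasDerivAt

theorem tendsto_nhdsGT_zero_of_eqOn {h g : ℝ → ℝ} (hh : Continuous h) (hg : EqOn h g (Ioi 0)) :
    Tendsto g (𝓝[>] 0) (𝓝 (h 0)) :=
  ((hh.tendsto 0).mono_left nhdsWithin_le_nhds).congr' (eventually_nhdsWithin_of_forall hg)

theorem continuousAt_zero_ite_pos {h c : ℝ → ℝ} (hc : Continuous c)
    (hh : Tendsto h (𝓝[>] 0) (𝓝 (c 0))) :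
    ContinuousAt (fun x => if 0 < x then h x else c x) 0 := by
  rw [continuousAt_iff_continuous_left'_right']
  constructor
  · exact hc.continuousWithinAt.congr (fun y hy => if_neg (not_lt.2 (le_of_lt hy)))
      (if_neg (lt_irrefl 0))
  · rw [ContinuousWithinAt, if_neg (lt_irrefl 0)]
    exact hh.congr' (eventually_nhdsWithin_of_forall fun y hy => (if_pos hy).symm)

theorem exists_contDiff_extension_Ioi {g g' : ℝ → ℝ} {a b : ℝ}
    (hg : ∀ x, 0 < x → HasDerivAt g (g' x) x) (hg' : ContinuousOn g' (Ioi 0))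
    (ha : Tendsto g (𝓝[>] 0) (𝓝 a)) (hb : Tendsto g' (𝓝[>] 0) (𝓝 b)) :
    ∃ k : ℝ → ℝ, ContDiff ℝ 1 k ∧ EqOn k g (Ioi 0) ∧ k 0 = a ∧ deriv k 0 = b := by
  set k := fun x => if 0 < x then g x else a + b * x
  set k' := fun x => if 0 < x then g' x else b
  have hk' : Continuous k' := by
    rw [continuous_iff_continuousAt]
    intro x
    rcases lt_trichotomy x 0 with hx | rfl | hx
    · exact continuousAt_const.congr
        (eventually_of_mem (Iio_mem_nhds hx) fun y hy => (if_neg (not_lt.2 hy.le)).symm)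
    · exact continuousAt_zero_ite_pos continuous_const hb
    · exact (hg'.continuousAt (Ioi_mem_nhds hx)).congr
        (eventually_of_mem (Ioi_mem_nhds hx) fun y hy => (if_pos hy).symm)
  have hk : ∀ y ≠ 0, HasDerivAt k (k' y) y := by
    intro y hy
    rcases hy.lt_or_gt with hy | hy
    · rw [show k' y = b from if_neg (not_lt.2 hy.le)]
      have : HasDerivAt (fun x => a + b * x) b y := by
        simpa using ((hasDerivAt_id y).const_mul b).const_add a
      exact this.congr_of_eventuallyEq
        (eventually_of_mem (Iio_mem_nhds hy) fun x hx => if_neg (not_lt.2 hx.le))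
    · rw [show k' y = g' y from if_pos hy]
      exact (hg y hy).congr_of_eventuallyEq
        (eventually_of_mem (Ioi_mem_nhds hy) fun x hx => if_pos hx)
  have hkd := hasDerivAt_of_hasDerivAt_of_ne' hk
    (continuousAt_zero_ite_pos (by fun_prop) (by simpa using ha)) hk'.continuousAt
  have hderiv : deriv k = k' := funext fun x => (hkd x).deriv
  refine ⟨k, contDiff_one_iff_deriv.2 ⟨fun x => (hkd x).differentiableAt, hderiv ▸ hk'⟩,
    fun x hx => if_pos hx, by simp [k], by simp [hderiv, k']⟩

theorem aemeasurable_restrict_of_intervalIntegrable_mul {g k : ℝ → ℝ} {u : ℝ}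
    (hk : Measurable k) (h : IntervalIntegrable (fun s => g s * k (u - s)) volume 0 u) :
    AEMeasurable g (volume.restrict (Ioo 0 u ∩ {s | k (u - s) ≠ 0})) := by
  have hk' : Measurable fun s => k (u - s) := hk.comp (measurable_const.sub measurable_id)
  have hS : MeasurableSet (Ioo 0 u ∩ {s | k (u - s) ≠ 0}) :=
    measurableSet_Ioo.inter (hk' (measurableSet_singleton 0).compl)
  exact ((h.1.aemeasurable.mono_measure (Measure.restrict_mono
    (inter_subset_left.trans Ioo_subset_Ioc_self) le_rfl)).mul hk'.inv.aemeasurable).congr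
    (ae_restrict_of_forall_mem hS fun s hs => mul_inv_cancel_right₀ hs.2 _)

theorem isClosed_setOf_Ioo_inter_subset {k : ℝ → ℝ} (hk : Continuous k) (W : Set ℝ) :
    IsClosed {u | Ioo 0 u ∩ {s | k (u - s) ≠ 0} ⊆ W} := by
  have : {u | Ioo 0 u ∩ {s | k (u - s) ≠ 0} ⊆ W}ᶜ
      = ⋃ s ∈ Wᶜ, {u | s ∈ Ioo 0 u ∩ {s | k (u - s) ≠ 0}} := by
    ext u
    simp only [mem_compl_iff, mem_ofPred_eq, not_subset, mem_iUnion, exists_prop]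
    constructor <;> rintro ⟨s, h₁, h₂⟩ <;> exact ⟨s, h₂, h₁⟩
  rw [← isOpen_compl_iff, this]
  exact isOpen_biUnion fun s _ => (isOpen_const.inter isOpen_Ioi).inter
    (isOpen_ne_fun (hk.comp (continuous_id.sub continuous_const)) continuous_const)

/- With `S u = (0, u) ∩ {s | k (u - s) ≠ 0}`, let `W` be the union of those `S u` on which `g` is
a.e.-measurable (a countable union, by Lindelöf). Where `S u ⊆ W`, `laplaceConv g k u` only sees
a measurable version of `g`; elsewhere the integrand is not integrable, the integral is the junk
value `0`, and `g u = v u`. As `{u | S u ⊆ W}` is closed, `g` is measurable on `(0, ∞)`. -/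
theorem aemeasurable_of_eq_laplaceConv {g k v : ℝ → ℝ} (c : ℝ) (hk : Continuous k)
    (hv : AEMeasurable v (volume.restrict (Ioi 0)))
    (hg : ∀ u, 0 < u → g u = c * laplaceConv g k u + v u) :
    AEMeasurable g (volume.restrict (Ioi 0)) := by
  set S : ℝ → Set ℝ := fun u => Ioo 0 u ∩ {s | k (u - s) ≠ 0}
  have hS : ∀ u, IsOpen (S u) := fun u =>
    isOpen_Ioo.inter (isOpen_ne_fun (hk.comp (continuous_const.sub continuous_id)) continuous_const)
  set I := {u | AEMeasurable g (volume.restrict (S u))}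
  set W := ⋃ u ∈ I, S u
  have hW : AEMeasurable g (volume.restrict W) := by
    obtain ⟨T, hTI, hT, hTW⟩ := TopologicalSpace.isOpen_biUnion_countable I S fun u _ => hS u
    have := hT.to_subtype
    rw [show W = ⋃ u ∈ T, S u from hTW.symm, biUnion_eq_iUnion]
    exact aemeasurable_iUnion_iff.2 fun u => hTI u.2
  have hWm : MeasurableSet W := (isOpen_biUnion fun u _ => hS u).measurableSet
  have hG : MeasurableSet {u | S u ⊆ W} := (isClosed_setOf_Ioo_inter_subset hk W).measurableSet
  have hψ : ∀ᵐ s, s ∈ W → g s = hW.mk g s := (ae_restrict_iff' hWm).1 hW.ae_eq_mk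
  have hrepr : ∀ u, 0 < u →
      g u = c * {u | S u ⊆ W}.indicator (laplaceConv (hW.mk g) k) u + v u := by
    intro u hu
    by_cases huW : S u ⊆ W
    · rw [indicator_of_mem huW, hg u hu]
      congr 2
      refine intervalIntegral.integral_congr_ae ?_
      filter_upwards [hψ, Measure.ae_ne volume u] with s hgs hsu hs
      rw [uIoc_of_le hu.le] at hs
      by_cases hk0 : k (u - s) = 0
      · simp [hk0]
      · rw [hgs (huW ⟨⟨hs.1, lt_of_le_of_ne hs.2 hsu⟩, hk0⟩)]
    · rw [indicator_of_notMem huW, hg u hu, laplaceConv, intervalIntegral.integral_undef]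
      intro hint
      exact huW (subset_biUnion_of_mem (u := S)
        (aemeasurable_restrict_of_intervalIntegrable_mul hk.measurable hint))
  exact ((((measurable_laplaceConv hW.measurable_mk hk.measurable).indicator hG).aemeasurable
    |>.const_mul c).add hv).congr
    (ae_restrict_of_forall_mem measurableSet_Ioi fun u hu => (hrepr u hu).symm)

section Renewal

variable {c : ℝ} {k v m : ℝ → ℝ}

theorem locallyIntegrable_comp_max
    (hm : ∀ x : ℝ, 0 < x → ∃ M, ∀ u ∈ Icc (0:ℝ) x, |m u| ≤ M)
    (hmeas : AEMeasurable (fun s => m (max s 0)) (volume.restrict (Ioi 0))) :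
    LocallyIntegrable (fun s => m (max s 0)) := by
  have hmeas' : AEMeasurable (fun s => m (max s 0)) := by
    have hneg : AEMeasurable (fun s => m (max s 0)) (volume.restrict (Iic 0)) :=
      (aemeasurable_const (b := m 0)).congr (ae_restrict_of_forall_mem measurableSet_Iic
        fun s hs => by simp only [max_eq_right (mem_Iic.1 hs)])
    have := aemeasurable_union_iff.2 ⟨hneg, hmeas⟩
    rwa [Iic_union_Ioi, Measure.restrict_univ] at this
  rw [locallyIntegrable_iff]
  intro K hK
  obtain ⟨x, hx⟩ := hK.bddAbove
  obtain ⟨M, hM⟩ := hm (max x 1) (by positivity)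
  refine Measure.integrableOn_of_bounded hK.measure_lt_top.ne hmeas'.aestronglyMeasurable
    (ae_restrict_of_forall_mem hK.measurableSet fun s hs => hM _ ⟨le_max_right _ _, ?_⟩)
  exact max_le ((hx hs).trans (le_max_left _ _)) (zero_le_one.trans (le_max_right _ _))

theorem continuous_comp_max_of_renewal (hk : Continuous k) (hv : ContinuousOn v (Ici 0))
    (hm_loc : ∀ x : ℝ, 0 < x → ∃ M, ∀ u ∈ Icc (0:ℝ) x, |m u| ≤ M)
    (hm : ∀ u, 0 ≤ u → m u = c * laplaceConv (fun s => m (max s 0)) k u + v u) :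
    Continuous fun s => m (max s 0) := by
  have hint : LocallyIntegrable fun s => m (max s 0) := by
    refine locallyIntegrable_comp_max hm_loc (aemeasurable_of_eq_laplaceConv c hk
      ((hv.mono Ioi_subset_Ici_self).aemeasurable measurableSet_Ioi) fun u hu => ?_)
    simp only [max_eq_left hu.le]
    exact hm u hu.le
  have hmc : ContinuousOn m (Ici 0) :=
    ((continuousOn_const.mul (continuous_laplaceConv hint hk).continuousOn).add hv).congr
      fun u hu => hm u hu
  exact hmc.comp_continuous (continuous_id.max continuous_const) fun s => le_max_right s 0

theorem hasDerivAt_of_renewal (hk : ContDiff ℝ 1 k) (hv : ContDiffOn ℝ 1 v (Ioi 0))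
    (hmc : Continuous fun s => m (max s 0))
    (hm : ∀ u, 0 ≤ u → m u = c * laplaceConv (fun s => m (max s 0)) k u + v u)
    {u : ℝ} (hu : 0 < u) :
    HasDerivAt m (deriv v u + c * (m u * k 0 + laplaceConv (fun s => m (max s 0)) (deriv k) u))
      u := by
  have h := ((hasDerivAt_laplaceConv hmc hk u).const_mul c).add
    (hv.hasDerivAt_deriv_of_pos one_ne_zero hu)
  rw [max_eq_left hu.le] at h
  exact (h.congr_deriv (add_comm _ _)).congr_of_eventuallyEq
    (eventually_of_mem (Ioi_mem_nhds hu) fun x hx => hm x hx.le)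

theorem exists_contDiff_extension_of_renewal {v'₀ : ℝ} (hk : ContDiff ℝ 1 k)
    (hv : ContDiffOn ℝ 1 v (Ioi 0)) (hv'₀ : Tendsto (deriv v) (𝓝[>] 0) (𝓝 v'₀))
    (hmc : Continuous fun s => m (max s 0))
    (hm : ∀ u, 0 ≤ u → m u = c * laplaceConv (fun s => m (max s 0)) k u + v u) :
    ∃ me : ℝ → ℝ, ContDiff ℝ 1 me ∧ EqOn me m (Ici 0) ∧ deriv me 0 = v'₀ + c * (m 0 * k 0) := by
  have hconv : Continuous (laplaceConv (fun s => m (max s 0)) (deriv k)) :=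
    continuous_laplaceConv hmc.locallyIntegrable (hk.continuous_deriv le_rfl)
  have hmcon : ContinuousOn m (Ioi 0) :=
    hmc.continuousOn.congr fun x hx => by simp only [max_eq_left (mem_Ioi.1 hx).le]
  have hm0 : Tendsto m (𝓝[>] 0) (𝓝 (m 0)) := by
    simpa using tendsto_nhdsGT_zero_of_eqOn hmc fun y hy => by
      simp only [max_eq_left (mem_Ioi.1 hy).le]
  obtain ⟨me, hme, hme_eq, hme0, hme'0⟩ := exists_contDiff_extension_Ioi
    (fun x hx => hasDerivAt_of_renewal hk hv hmc hm hx)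
    ((hv.continuousOn_deriv_of_isOpen isOpen_Ioi le_rfl).add
      (continuousOn_const.mul ((hmcon.mul continuousOn_const).add hconv.continuousOn)))
    hm0 (hv'₀.add (((hm0.mul_const _).add
      (tendsto_laplaceConv_nhdsGT_zero hmc.locallyIntegrable
        (hk.continuous_deriv le_rfl))).const_mul c))
  refine ⟨me, hme, fun x hx => ?_, by rw [hme'0, add_zero]⟩
  rcases (mem_Ici.1 hx).eq_or_lt with rfl | hx
  exacts [hme0, hme_eq hx]

theorem hasDerivAt_laplaceConv_comp_max {k' me : ℝ → ℝ} (hk' : Continuous k')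
    (hme : ContDiff ℝ 1 me) (hme_eq : EqOn me m (Ici 0)) {u : ℝ} (hu : 0 < u) :
    HasDerivAt (laplaceConv (fun s => m (max s 0)) k') (k' u * m 0 + laplaceConv k' (deriv me) u)
      u := by
  rw [← hme_eq self_mem_Ici]
  refine (hasDerivAt_laplaceConv hk' hme u).congr_of_eventuallyEq
    (eventually_of_mem (Ioi_mem_nhds hu) fun x hx => ?_)
  rw [laplaceConv_comm]
  refine intervalIntegral.integral_congr fun s hs => ?_
  rw [uIcc_of_le (le_of_lt hx)] at hs
  have h : 0 ≤ x - s := sub_nonneg.2 hs.2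
  simp only [max_eq_left h, hme_eq h]

theorem hasDerivAt_deriv_of_renewal {me : ℝ → ℝ} (hk : ContDiff ℝ 1 k)
    (hv : ContDiffOn ℝ 2 v (Ioi 0)) (hmc : Continuous fun s => m (max s 0))
    (hm : ∀ u, 0 ≤ u → m u = c * laplaceConv (fun s => m (max s 0)) k u + v u)
    (hme : ContDiff ℝ 1 me) (hme_eq : EqOn me m (Ici 0)) {u : ℝ} (hu : 0 < u) :
    HasDerivAt (deriv m) (deriv (deriv v) u
      + c * (deriv m u * k 0 + (deriv k u * m 0 + laplaceConv (deriv k) (deriv me) u))) u := by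
  have hmd := fun {x : ℝ} (hx : 0 < x) => hasDerivAt_of_renewal hk (hv.of_le one_le_two) hmc hm hx
  have h := ((hv.deriv_of_isOpen isOpen_Ioi (by norm_num : (1 : WithTop ℕ∞) + 1 ≤ 2)
    |>.hasDerivAt_deriv_of_pos one_ne_zero hu).add
    ((((hmd hu).mul_const (k 0)).add
      (hasDerivAt_laplaceConv_comp_max (hk.continuous_deriv le_rfl) hme hme_eq hu)).const_mul c))
  rw [← (hmd hu).deriv] at h
  exact h.congr_of_eventuallyEq (eventually_of_mem (Ioi_mem_nhds hu) fun x hx => (hmd hx).deriv)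

theorem tendsto_deriv_deriv_of_renewal {me : ℝ → ℝ} {v''₀ : ℝ} (hk : ContDiff ℝ 1 k)
    (hv : ContDiffOn ℝ 2 v (Ioi 0)) (hv''₀ : Tendsto (deriv (deriv v)) (𝓝[>] 0) (𝓝 v''₀))
    (hmc : Continuous fun s => m (max s 0))
    (hm : ∀ u, 0 ≤ u → m u = c * laplaceConv (fun s => m (max s 0)) k u + v u)
    (hme : ContDiff ℝ 1 me) (hme_eq : EqOn me m (Ici 0)) :
    Tendsto (deriv (deriv m)) (𝓝[>] 0) (𝓝 (v''₀ + c * (deriv me 0 * k 0 + deriv k 0 * m 0))) := by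
  have hk' : Continuous (deriv k) := hk.continuous_deriv le_rfl
  have h := hv''₀.add ((((tendsto_nhdsGT_zero_of_eqOn (hme.continuous_deriv le_rfl)
    ((hme_eq.mono Ioi_subset_Ici_self).deriv isOpen_Ioi)).mul_const (k 0)).add
    ((((hk'.tendsto 0).mono_left nhdsWithin_le_nhds).mul_const (m 0)).add
      (tendsto_laplaceConv_nhdsGT_zero hk'.locallyIntegrable
        (hme.continuous_deriv le_rfl)))).const_mul c)
  rw [add_zero] at h
  exact h.congr' (eventually_nhdsWithin_of_forall fun u hu =>
    ((hasDerivAt_deriv_of_renewal hk hv hmc hm hme hme_eq hu).deriv).symm)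

end Renewal

theorem stmt_3_general (φ : ℝ)
    (f F v m : ℝ → ℝ)
    (hFf : ∀ u : ℝ, 0 < u → HasDerivAt F (f u) u)
    (hm_loc : ∀ x : ℝ, 0 < x → ∃ M, ∀ u ∈ Set.Icc (0:ℝ) x, |m u| ≤ M)
    (hm_eq : ∀ u : ℝ, 0 ≤ u →
      m u = φ * (∫ y in (0:ℝ)..u, m (u - y) * f y) + v u)
    (hF_cd : ContDiffOn ℝ 2 F (Set.Ioi 0))
    (hv_c : ContinuousOn v (Set.Ici 0)) (hv_cd : ContDiffOn ℝ 2 v (Set.Ioi 0))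
    (f0 f'0 v'0 v''0 : ℝ)
    (hf0 : Tendsto f (𝓝[>] (0:ℝ)) (𝓝 f0))
    (hf'0 : Tendsto (deriv f) (𝓝[>] (0:ℝ)) (𝓝 f'0))
    (hv'0 : Tendsto (deriv v) (𝓝[>] (0:ℝ)) (𝓝 v'0))
    (hv''0 : Tendsto (iteratedDeriv 2 v) (𝓝[>] (0:ℝ)) (𝓝 v''0)) :
    (∀ u : ℝ, 0 < u → iteratedDeriv 2 m u
        = φ * ((∫ y in (0:ℝ)..u, deriv m (u - y) * deriv f y)
            + m 0 * deriv f u + deriv m u * f0)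
          + iteratedDeriv 2 v u) ∧
    Tendsto (iteratedDeriv 2 m) (𝓝[>] (0:ℝ))
      (𝓝 (φ * (v 0 * f'0 + (φ * v 0 * f0 + v'0) * f0) + v''0)) := by
  have hf : ContDiffOn ℝ 1 f (Ioi 0) :=
    (hF_cd.deriv_of_isOpen isOpen_Ioi (by norm_num)).congr fun x hx => ((hFf x hx).deriv).symm
  obtain ⟨fe, hfe, hfe_eq, hfe0, hfe'0⟩ := exists_contDiff_extension_Ioi
    (fun x hx => hf.hasDerivAt_deriv_of_pos one_ne_zero hx)
    (hf.continuousOn_deriv_of_isOpen isOpen_Ioi le_rfl) hf0 hf'0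
  have hm0 : m 0 = v 0 := by simpa using hm_eq 0 le_rfl
  have hrenewal : ∀ u, 0 ≤ u → m u = φ * laplaceConv (fun s => m (max s 0)) fe u + v u :=
    fun u hu => by
      rw [hm_eq u hu, intervalIntegral_mul_eq_laplaceConv
        (fun x hx => congrArg m (max_eq_left (le_of_lt hx))) hfe_eq hu, laplaceConv_comm]
  have hmc := continuous_comp_max_of_renewal hfe.continuous hv_c hm_loc hrenewal
  obtain ⟨me, hme, hme_eq, hme'0⟩ :=
    exists_contDiff_extension_of_renewal hfe (hv_cd.of_le one_le_two) hv'0 hmc hrenewal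
  have hfe' := hfe_eq.deriv isOpen_Ioi
  have hme' := (hme_eq.mono Ioi_subset_Ici_self).deriv isOpen_Ioi
  have hd2 : ∀ h : ℝ → ℝ, iteratedDeriv 2 h = deriv (deriv h) := fun h => by
    rw [iteratedDeriv_succ, iteratedDeriv_one]
  rw [hd2] at hv''0 ⊢
  refine ⟨fun u hu => ?_, ?_⟩
  · rw [hd2, (hasDerivAt_deriv_of_renewal hfe hv_cd hmc hrenewal hme hme_eq hu).deriv,
      intervalIntegral_mul_eq_laplaceConv hme' hfe' hu.le, ← hfe' hu, hfe0, hm0]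
    ring
  · have h := tendsto_deriv_deriv_of_renewal hfe hv_cd hv''0 hmc hrenewal hme hme_eq
    rw [hme'0, hfe'0, hfe0, hm0] at h
    rw [show φ * (v 0 * f'0 + (φ * v 0 * f0 + v'0) * f0) + v''0
        = v''0 + φ * ((v'0 + φ * (v 0 * f0)) * f0 + f'0 * v 0) by ring]
    exact h

/-- under the same renewal hypotheses as Statement 2, for all `u > 0`,
`m''(u) = φ(∫₀^u m'(u-y) f'(y) dy + m(0) f'(u) + m'(u) f(0)) + v''(u)`, and
`m''(0⁺) = φ(v(0) f'(0) + m'(0) f(0)) + v''(0)` where `m'(0) = φ v(0) f(0) + v'(0)`. -/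
theorem stmt_3 (φ : ℝ) (hφ0 : 0 < φ) (hφ1 : φ < 1)
    (f F v m : ℝ → ℝ)
    (hf_nonneg : ∀ u : ℝ, 0 < u → 0 ≤ f u)
    (hf_integrable : MeasureTheory.IntegrableOn f (Set.Ioi 0))
    (hf_total : ∫ y in Set.Ioi (0:ℝ), f y = 1)
    (hF_def : ∀ u : ℝ, 0 ≤ u → F u = ∫ y in (0:ℝ)..u, f y)
    (hFf : ∀ u : ℝ, 0 < u → HasDerivAt F (f u) u)
    (hv_loc : ∀ x : ℝ, 0 < x → ∃ M, ∀ u ∈ Set.Icc (0:ℝ) x, |v u| ≤ M)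
    (hm_loc : ∀ x : ℝ, 0 < x → ∃ M, ∀ u ∈ Set.Icc (0:ℝ) x, |m u| ≤ M)
    (hm_eq : ∀ u : ℝ, 0 ≤ u →
      m u = φ * (∫ y in (0:ℝ)..u, m (u - y) * f y) + v u)
    (hF_c : ContinuousOn F (Set.Ici 0)) (hF_cd : ContDiffOn ℝ 2 F (Set.Ioi 0))
    (hF_lim : ∀ k ≤ 2, ∃ L, Tendsto (iteratedDeriv k F) (𝓝[>] (0:ℝ)) (𝓝 L))
    (hv_c : ContinuousOn v (Set.Ici 0)) (hv_cd : ContDiffOn ℝ 2 v (Set.Ioi 0))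
    (hv_lim : ∀ k ≤ 2, ∃ L, Tendsto (iteratedDeriv k v) (𝓝[>] (0:ℝ)) (𝓝 L))
    (f0 f'0 v'0 v''0 : ℝ)
    (hf0 : Tendsto f (𝓝[>] (0:ℝ)) (𝓝 f0))
    (hf'0 : Tendsto (deriv f) (𝓝[>] (0:ℝ)) (𝓝 f'0))
    (hv'0 : Tendsto (deriv v) (𝓝[>] (0:ℝ)) (𝓝 v'0))
    (hv''0 : Tendsto (iteratedDeriv 2 v) (𝓝[>] (0:ℝ)) (𝓝 v''0)) :
    (∀ u : ℝ, 0 < u → iteratedDeriv 2 m u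
        = φ * ((∫ y in (0:ℝ)..u, deriv m (u - y) * deriv f y)
            + m 0 * deriv f u + deriv m u * f0)
          + iteratedDeriv 2 v u) ∧
    Tendsto (iteratedDeriv 2 m) (𝓝[>] (0:ℝ))
      (𝓝 (φ * (v 0 * f'0 + (φ * v 0 * f0 + v'0) * f0) + v''0)) :=
  stmt_3_general φ f F v m hFf hm_loc hm_eq hF_cd hv_c hv_cd f0 f'0 v'0 v''0 hf0 hf'0 hv'0 hv''0
end

section
/- Let 0 < φ < 1, let m₁, v₁ : [0,∞) → ℝ be continuous, let f₁ : (0,∞) → ℝ be continuous, and let m₂ : (0,∞) → ℝ satisfy m₂(u) = φ ∫₀^u m₁(u−y) f₁(y) dy + v₁(u) for all u > 0. If I₀(f₁), I₁(f₁), I₂(f₁) are all finite, then for every x > 0: sup_{u ∈ [0,x]} |u² m₂(u)| ≤ φ ( I₀(f₁) · sup_{u ∈ [0,x]} |u² m₁(u)| + 2 I₁(f₁) · sup_{u ∈ [0,x]} |u m₁(u)| + I₂(f₁) · sup_{u ∈ [0,x]} |m₁(u)| ) + sup_{u ∈ [0,∞)} |u² v₁(u)|. -/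
open MeasureTheory Filter Topology
open scoped ENNReal

open Set

/-!
Inside the convolution integral write `u² = (u - y)² + 2 y (u - y) + y²`: the three pieces are
bounded by the suprema of `w² |m₁ w|`, `w |m₁ w|` and `|m₁ w|` over `[0, x]`, leaving the moments
`I₀, I₁, I₂` of `|f₁|` as the remaining integrals.
-/

theorem enorm_add_sq_mul_mul {t y : ℝ} (ht : 0 ≤ t) (hy : 0 ≤ y) (c d : ℝ) :
    ‖(t + y) ^ 2 * (c * d)‖ₑ =
      ‖t ^ 2 * c‖ₑ * ENNReal.ofReal |d| + 2 * ‖t * c‖ₑ * ENNReal.ofReal (y * |d|)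
        + ‖c‖ₑ * ENNReal.ofReal (y ^ 2 * |d|) := by
  simp only [Real.enorm_eq_ofReal_abs]
  rw [← ENNReal.ofReal_ofNat 2, ← ENNReal.ofReal_mul (abs_nonneg _),
    ← ENNReal.ofReal_mul zero_le_two, ← ENNReal.ofReal_mul (by positivity),
    ← ENNReal.ofReal_mul (abs_nonneg _), ← ENNReal.ofReal_add (by positivity) (by positivity),
    ← ENNReal.ofReal_add (by positivity) (by positivity)]
  congr 1
  simp only [abs_mul, abs_pow, abs_of_nonneg ht, abs_of_nonneg (add_nonneg ht hy)]
  ring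

theorem enorm_sq_mul_intervalIntegral_conv_le {m f : ℝ → ℝ}
    (hf₀ : IntegrableOn (fun y => |f y|) (Ioi 0))
    (hf₁ : IntegrableOn (fun y => y * |f y|) (Ioi 0))
    (hf₂ : IntegrableOn (fun y => y ^ 2 * |f y|) (Ioi 0)) {x u : ℝ} (hu : u ∈ Ioc 0 x) :
    ‖u ^ 2 * ∫ y in (0:ℝ)..u, m (u - y) * f y‖ₑ ≤
      ENNReal.ofReal (∫ y in Ioi 0, |f y|) * (⨆ w ∈ Icc 0 x, ‖w ^ 2 * m w‖ₑ)
        + 2 * ENNReal.ofReal (∫ y in Ioi 0, y * |f y|) * (⨆ w ∈ Icc 0 x, ‖w * m w‖ₑ)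
        + ENNReal.ofReal (∫ y in Ioi 0, y ^ 2 * |f y|) * (⨆ w ∈ Icc 0 x, ‖m w‖ₑ) := by
  set S₂ := ⨆ w ∈ Icc 0 x, ‖w ^ 2 * m w‖ₑ
  set S₁ := ⨆ w ∈ Icc 0 x, ‖w * m w‖ₑ
  set S₀ := ⨆ w ∈ Icc 0 x, ‖m w‖ₑ
  have hpoint : ∀ y ∈ Ioc 0 u, ‖u ^ 2 * (m (u - y) * f y)‖ₑ ≤
      S₂ * ENNReal.ofReal |f y| + 2 * S₁ * ENNReal.ofReal (y * |f y|)
        + S₀ * ENNReal.ofReal (y ^ 2 * |f y|) := by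
    intro y hy
    have hmem : u - y ∈ Icc 0 x := ⟨sub_nonneg.2 hy.2, by linarith [hy.1, hu.2]⟩
    have h := enorm_add_sq_mul_mul (sub_nonneg.2 hy.2) hy.1.le (m (u - y)) (f y)
    rw [sub_add_cancel] at h
    rw [h]
    gcongr
    · exact le_iSup₂ (f := fun w (_ : w ∈ Icc 0 x) => ‖w ^ 2 * m w‖ₑ) _ hmem
    · exact le_iSup₂ (f := fun w (_ : w ∈ Icc 0 x) => ‖w * m w‖ₑ) _ hmem
    · exact le_iSup₂ (f := fun w (_ : w ∈ Icc 0 x) => ‖m w‖ₑ) _ hmem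
  have hnonneg : ∀ {g : ℝ → ℝ}, (∀ y, 0 < y → 0 ≤ g y) → 0 ≤ᵐ[volume.restrict (Ioi 0)] g :=
    fun hg => (ae_restrict_mem measurableSet_Ioi).mono hg
  rw [ofReal_integral_eq_lintegral_ofReal hf₀ (hnonneg fun y _ => abs_nonneg _),
    ofReal_integral_eq_lintegral_ofReal hf₁ (hnonneg fun y hy => by positivity),
    ofReal_integral_eq_lintegral_ofReal hf₂ (hnonneg fun y _ => by positivity)]
  calc ‖u ^ 2 * ∫ y in (0:ℝ)..u, m (u - y) * f y‖ₑ
      = ‖∫ y in Ioc 0 u, u ^ 2 * (m (u - y) * f y)‖ₑ := by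
        rw [← intervalIntegral.integral_const_mul, intervalIntegral.integral_of_le hu.1.le]
    _ ≤ ∫⁻ y in Ioc 0 u, ‖u ^ 2 * (m (u - y) * f y)‖ₑ := enorm_integral_le_lintegral_enorm _
    _ ≤ ∫⁻ y in Ioc 0 u, (S₂ * ENNReal.ofReal |f y| + 2 * S₁ * ENNReal.ofReal (y * |f y|)
          + S₀ * ENNReal.ofReal (y ^ 2 * |f y|)) := setLIntegral_mono' measurableSet_Ioc hpoint
    _ ≤ ∫⁻ y in Ioi 0, (S₂ * ENNReal.ofReal |f y| + 2 * S₁ * ENNReal.ofReal (y * |f y|)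
          + S₀ * ENNReal.ofReal (y ^ 2 * |f y|)) := lintegral_mono_set Ioc_subset_Ioi_self
    _ = _ := by
      rw [lintegral_add_right' _ (hf₂.aemeasurable.ennreal_ofReal.const_mul _),
        lintegral_add_right' _ (hf₁.aemeasurable.ennreal_ofReal.const_mul _),
        lintegral_const_mul'' _ hf₀.aemeasurable.ennreal_ofReal,
        lintegral_const_mul'' _ hf₁.aemeasurable.ennreal_ofReal,
        lintegral_const_mul'' _ hf₂.aemeasurable.ennreal_ofReal]
      ring

theorem stmt_7_general (φ : ℝ) (hφ0 : 0 < φ)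
    (m₁ v₁ f₁ m₂ : ℝ → ℝ)
    (heq : ∀ u : ℝ, 0 < u →
      m₂ u = φ * (∫ y in (0:ℝ)..u, m₁ (u - y) * f₁ y) + v₁ u)
    (hI0 : MeasureTheory.IntegrableOn (fun y => |f₁ y|) (Set.Ioi 0))
    (hI1 : MeasureTheory.IntegrableOn (fun y => y * |f₁ y|) (Set.Ioi 0))
    (hI2 : MeasureTheory.IntegrableOn (fun y => y ^ 2 * |f₁ y|) (Set.Ioi 0)) :
    ∀ x : ℝ, 0 < x →
      (⨆ u ∈ Set.Ioc (0:ℝ) x, (‖u ^ 2 * m₂ u‖₊ : ℝ≥0∞)) ≤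
        ENNReal.ofReal φ *
            (ENNReal.ofReal (∫ y in Set.Ioi (0:ℝ), |f₁ y|)
                * (⨆ u ∈ Set.Icc (0:ℝ) x, (‖u ^ 2 * m₁ u‖₊ : ℝ≥0∞))
              + 2 * ENNReal.ofReal (∫ y in Set.Ioi (0:ℝ), y * |f₁ y|)
                * (⨆ u ∈ Set.Icc (0:ℝ) x, (‖u * m₁ u‖₊ : ℝ≥0∞))
              + ENNReal.ofReal (∫ y in Set.Ioi (0:ℝ), y ^ 2 * |f₁ y|)
                * (⨆ u ∈ Set.Icc (0:ℝ) x, (‖m₁ u‖₊ : ℝ≥0∞)))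
          + ⨆ u ∈ Set.Ici (0:ℝ), (‖u ^ 2 * v₁ u‖₊ : ℝ≥0∞) := by
  intro x _
  refine iSup₂_le fun u hu => ?_
  calc ‖u ^ 2 * m₂ u‖ₑ
      = ‖φ * (u ^ 2 * ∫ y in (0:ℝ)..u, m₁ (u - y) * f₁ y) + u ^ 2 * v₁ u‖ₑ := by
        rw [heq u hu.1]; ring_nf
    _ ≤ ‖φ‖ₑ * ‖u ^ 2 * ∫ y in (0:ℝ)..u, m₁ (u - y) * f₁ y‖ₑ + ‖u ^ 2 * v₁ u‖ₑ := by
        rw [← enorm_mul]; exact enorm_add_le _ _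
    _ ≤ _ := by
      rw [Real.enorm_of_nonneg hφ0.le]
      gcongr
      · exact enorm_sq_mul_intervalIntegral_conv_le hI0 hI1 hI2 hu
      · exact le_iSup₂ (f := fun w (_ : w ∈ Ici (0:ℝ)) => ‖w ^ 2 * v₁ w‖ₑ) u hu.1.le

/-- if `m₂(u) = φ ∫₀^u m₁(u-y) f₁(y) dy + v₁(u)` for `u > 0`, with
`m₁, v₁` continuous on `[0,∞)`, `f₁` continuous on `(0,∞)`, and
`I₀(f₁), I₁(f₁), I₂(f₁) < ∞`, then for every `x > 0`,
`sup_{[0,x]} |u² m₂(u)| ≤ φ (I₀ sup_{[0,x]} |u² m₁(u)| + 2 I₁ sup_{[0,x]} |u m₁(u)|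
 + I₂ sup_{[0,x]} |m₁|) + ‖u² v₁(u)‖` (computed in `ℝ≥0∞`). -/
theorem stmt_7 (φ : ℝ) (hφ0 : 0 < φ) (hφ1 : φ < 1)
    (m₁ v₁ f₁ m₂ : ℝ → ℝ)
    (hm₁ : ContinuousOn m₁ (Set.Ici 0))
    (hv₁ : ContinuousOn v₁ (Set.Ici 0))
    (hf₁ : ContinuousOn f₁ (Set.Ioi 0))
    (heq : ∀ u : ℝ, 0 < u →
      m₂ u = φ * (∫ y in (0:ℝ)..u, m₁ (u - y) * f₁ y) + v₁ u)
    (hI0 : MeasureTheory.IntegrableOn (fun y => |f₁ y|) (Set.Ioi 0))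
    (hI1 : MeasureTheory.IntegrableOn (fun y => y * |f₁ y|) (Set.Ioi 0))
    (hI2 : MeasureTheory.IntegrableOn (fun y => y ^ 2 * |f₁ y|) (Set.Ioi 0)) :
    ∀ x : ℝ, 0 < x →
      (⨆ u ∈ Set.Ioc (0:ℝ) x, (‖u ^ 2 * m₂ u‖₊ : ℝ≥0∞)) ≤
        ENNReal.ofReal φ *
            (ENNReal.ofReal (∫ y in Set.Ioi (0:ℝ), |f₁ y|)
                * (⨆ u ∈ Set.Icc (0:ℝ) x, (‖u ^ 2 * m₁ u‖₊ : ℝ≥0∞))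
              + 2 * ENNReal.ofReal (∫ y in Set.Ioi (0:ℝ), y * |f₁ y|)
                * (⨆ u ∈ Set.Icc (0:ℝ) x, (‖u * m₁ u‖₊ : ℝ≥0∞))
              + ENNReal.ofReal (∫ y in Set.Ioi (0:ℝ), y ^ 2 * |f₁ y|)
                * (⨆ u ∈ Set.Icc (0:ℝ) x, (‖m₁ u‖₊ : ℝ≥0∞)))
          + ⨆ u ∈ Set.Ici (0:ℝ), (‖u ^ 2 * v₁ u‖₊ : ℝ≥0∞) :=
  stmt_7_general φ hφ0 m₁ v₁ f₁ m₂ heq hI0 hI1 hI2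
end

section
/- Consider the classical risk model where the claim amounts X are positive random variables with distribution function F_X, mean μ = E[X] > 0, and 0 < φ < 1. Assume F_X is three times continuously differentiable on (0,∞), continuous on [0,∞), and: (a) E[X³] < ∞; (b) lim_{u↓0} F_X'(u) exists and is finite; (c) ∫₀^∞ u^i |F_X''(u)| du < ∞ for i = 0, 2; (d) sup_u |u²(1−F_X(u))| < ∞ and sup_u |u² F_X^{(i)}(u)| < ∞ for i = 1, 2, 3. Define f(u) := (1−F_X(u))/μ, F(u) := ∫₀^u f(y) dy, and v(u) := φ(1−F(u)). Then the pair (F, v) satisfies: (1) the random variable Z with density f has finite variance; (2) F and v belong to C²₀([0,∞)); (3) f' and v'' belong to C²([0,∞)); (4) I₀(f'') < ∞ and I₂(f'') < ∞; (5) sup_u |u² w₁(u)| < ∞ and sup_u |u² w₂(u)| < ∞; (6) sup_u |u² w₁''(u)| < ∞ and sup_u |u² w₂''(u)| < ∞, where w₁(u) := φ v(0) f(u) + v'(u) and w₂(u) := φ (φ v(0) f(0) + v'(0)) f(u) + w₁'(u). -/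
/-!
On `(0, ∞)` everything is expressed through `F_X`: `f⁽ᵏ⁾ = -F_X⁽ᵏ⁾ / μ` for `k ≥ 1`, `F' = f`
and `v' = -φ f`, hence `w₁ = φ (v(0) - 1) f` and `w₂ = φ m'(0) f + φ (v(0) - 1) f'`. So each
quantity in (1) and (4)-(6) is a constant multiple of one controlled by (a), (c) or (d), or a sum
of two such. The regularity conditions (2)-(3) hold because `F` is a primitive of `f` and `v` is
affine in `F`; the one-sided limits at `0` come from (b) and the continuity of `F_X` at `0`.
-/

open MeasureTheory Filter Topology

/-- The function `w₁(u) = φ v(0) f(u) + v'(u)`. -/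
noncomputable def w1 (φ : ℝ) (v f : ℝ → ℝ) : ℝ → ℝ :=
  fun u => φ * v 0 * f u + deriv v u

/-- The function `w₂(u) = φ m'(0) f(u) + w₁'(u)`, where
`m'(0) = φ v(0) f(0) + v'(0)`. -/
noncomputable def w2 (φ f0 v'0 : ℝ) (v f : ℝ → ℝ) : ℝ → ℝ :=
  fun u => φ * (φ * v 0 * f0 + v'0) * f u + deriv (w1 φ v f) u

open Set

section Primitive

variable {f F : ℝ → ℝ} {a : ℝ}

/-- Composing with `max a` makes `f` continuous on all of `ℝ` without changing its primitive
from `a` on `[a, ∞)`, so the global fundamental theorem of calculus applies. -/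
lemma eqOn_primitive_comp_max (hF : ∀ u, a ≤ u → F u = ∫ y in a..u, f y) :
    EqOn F (fun u => ∫ y in a..u, f (max a y)) (Ici a) := by
  intro u hu
  rw [hF u hu]
  refine intervalIntegral.integral_congr fun y hy => ?_
  rw [uIcc_of_le hu] at hy
  simp only [max_eq_right hy.1]

lemma continuous_comp_max (hf : ContinuousOn f (Ici a)) : Continuous fun y => f (max a y) :=
  hf.comp_continuous (continuous_const.max continuous_id) fun y => le_max_left a y

lemma continuousOn_Ici_of_eq_primitive (hf : ContinuousOn f (Ici a))
    (hF : ∀ u, a ≤ u → F u = ∫ y in a..u, f y) : ContinuousOn F (Ici a) :=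
  (intervalIntegral.continuous_primitive
    (fun _ _ => (continuous_comp_max hf).intervalIntegrable _ _) a).continuousOn.congr
    (eqOn_primitive_comp_max hF)

lemma hasDerivAt_of_eq_primitive (hf : ContinuousOn f (Ici a))
    (hF : ∀ u, a ≤ u → F u = ∫ y in a..u, f y) {u : ℝ} (hu : a < u) :
    HasDerivAt F (f u) u := by
  have h := ((continuous_comp_max hf).integral_hasStrictDerivAt a u).hasDerivAt
  rw [max_eq_right hu.le] at h
  exact h.congr_of_eventuallyEq <| eventuallyEq_of_mem (Ici_mem_nhds hu)
    (eqOn_primitive_comp_max hF)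

lemma contDiffOn_succ_of_eq_primitive {n : ℕ} (hfc : ContinuousOn f (Ici a))
    (hf : ContDiffOn ℝ n f (Ioi a)) (hF : ∀ u, a ≤ u → F u = ∫ y in a..u, f y) :
    ContDiffOn ℝ (n + 1) F (Ioi a) := by
  have hd : ∀ u ∈ Ioi a, HasDerivAt F (f u) u := fun u hu =>
    hasDerivAt_of_eq_primitive hfc hF hu
  exact (contDiffOn_succ_iff_deriv_of_isOpen isOpen_Ioi).2
    ⟨fun u hu => (hd u hu).differentiableAt.differentiableWithinAt, by simp,
      hf.congr fun u hu => (hd u hu).deriv⟩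

lemma deriv_eqOn_of_eq_const_mul_const_sub_primitive {v : ℝ → ℝ} {b c : ℝ}
    (hf : ContinuousOn f (Ici a)) (hF : ∀ u, a ≤ u → F u = ∫ y in a..u, f y)
    (hv : ∀ u, a ≤ u → v u = b * (c - F u)) : EqOn (deriv v) (fun u => -b * f u) (Ioi a) := by
  intro u hu
  have h := ((hasDerivAt_of_eq_primitive hf hF hu).const_sub c).const_mul b
  rw [(h.congr_of_eventuallyEq <| eventuallyEq_of_mem (Ici_mem_nhds hu) hv).deriv]
  ring

end Primitive

lemma iteratedDeriv_eqOn_const_mul_const_sub {g h : ℝ → ℝ} {b c : ℝ} {s : Set ℝ}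
    (hs : IsOpen s) (hh : EqOn h (fun u => b * (c - g u)) s) {k : ℕ} (hk : k ≠ 0) :
    EqOn (iteratedDeriv k h) (fun u => -b * iteratedDeriv k g u) s := by
  intro u hu
  rw [hh.iteratedDeriv_of_isOpen hs k hu, iteratedDeriv_const_mul_field,
    iteratedDeriv_const_sub (Nat.pos_of_ne_zero hk), iteratedDeriv_neg]
  ring

lemma ContinuousOn.tendsto_nhdsGT_zero {g : ℝ → ℝ} (hg : ContinuousOn g (Ici 0)) :
    Tendsto g (𝓝[>] (0:ℝ)) (𝓝 (g 0)) :=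
  (hg 0 self_mem_Ici).mono_left (nhdsWithin_mono _ Ioi_subset_Ici_self)

/-- The class `C^n₀([0,∞))`. -/
def ContDiffZero (n : ℕ) (g : ℝ → ℝ) : Prop :=
  ContinuousOn g (Ici 0) ∧ ContDiffOn ℝ n g (Ioi 0) ∧
    ∀ k ≤ n, ∃ L, Tendsto (iteratedDeriv k g) (𝓝[>] (0:ℝ)) (𝓝 L)

namespace ContDiffZero

variable {n : ℕ} {g h : ℝ → ℝ}

lemma one_of_tendsto_deriv (hc : ContinuousOn g (Ici 0)) (hd : ContDiffOn ℝ 1 g (Ioi 0))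
    (hL : ∃ L, Tendsto (deriv g) (𝓝[>] (0:ℝ)) (𝓝 L)) : ContDiffZero 1 g := by
  refine ⟨hc, hd, fun k hk => ?_⟩
  interval_cases k
  · exact ⟨g 0, hc.tendsto_nhdsGT_zero⟩
  · simpa only [iteratedDeriv_one] using hL

lemma const_mul_const_sub (hg : ContDiffZero n g) {b c : ℝ}
    (hh : ∀ u, 0 ≤ u → h u = b * (c - g u)) : ContDiffZero n h := by
  have hIoi : EqOn h (fun u => b * (c - g u)) (Ioi 0) := fun u hu => hh u (le_of_lt hu)
  refine ⟨(continuousOn_const.mul (continuousOn_const.sub hg.1)).congr hh,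
    (contDiffOn_const.mul (contDiffOn_const.sub hg.2.1)).congr hIoi, fun k hk => ?_⟩
  obtain ⟨L, hL⟩ := hg.2.2 k hk
  rcases Nat.eq_zero_or_pos k with rfl | hk0
  · exact ⟨b * (c - L), tendsto_nhdsWithin_congr (fun u hu => (hIoi hu).symm)
      ((hL.const_sub c).const_mul b)⟩
  · exact ⟨-b * L, tendsto_nhdsWithin_congr
      (fun u hu => (iteratedDeriv_eqOn_const_mul_const_sub isOpen_Ioi hIoi hk0.ne' hu).symm)
      (hL.const_mul (-b))⟩

lemma of_eq_primitive {f F : ℝ → ℝ} (hf : ContDiffZero n f)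
    (hF : ∀ u, 0 ≤ u → F u = ∫ y in (0:ℝ)..u, f y) : ContDiffZero (n + 1) F := by
  have hFc := continuousOn_Ici_of_eq_primitive hf.1 hF
  refine ⟨hFc, by exact_mod_cast contDiffOn_succ_of_eq_primitive hf.1 hf.2.1 hF,
    fun k hk => ?_⟩
  rcases k with _ | k
  · exact ⟨F 0, hFc.tendsto_nhdsGT_zero⟩
  obtain ⟨L, hL⟩ := hf.2.2 k (by omega)
  refine ⟨L, tendsto_nhdsWithin_congr (fun u hu => ?_) hL⟩
  rw [iteratedDeriv_succ']
  exact (EqOn.iteratedDeriv_of_isOpen (fun y hy => (hasDerivAt_of_eq_primitive hf.1 hF hy).deriv)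
    isOpen_Ioi k hu).symm

end ContDiffZero

def SqWeightedBounded (g : ℝ → ℝ) : Prop :=
  ∃ M, ∀ u : ℝ, 0 < u → |u ^ 2 * g u| ≤ M

namespace SqWeightedBounded

variable {g h : ℝ → ℝ}

lemma congr (hg : SqWeightedBounded g) (hgh : EqOn h g (Ioi 0)) : SqWeightedBounded h := by
  obtain ⟨M, hM⟩ := hg
  exact ⟨M, fun u hu => hgh hu ▸ hM u hu⟩

lemma const_mul (hg : SqWeightedBounded g) (b : ℝ) : SqWeightedBounded fun u => b * g u := by
  obtain ⟨M, hM⟩ := hg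
  refine ⟨|b| * M, fun u hu => ?_⟩
  rw [mul_left_comm, abs_mul]
  exact mul_le_mul_of_nonneg_left (hM u hu) (abs_nonneg b)

lemma add (hg : SqWeightedBounded g) (hh : SqWeightedBounded h) :
    SqWeightedBounded fun u => g u + h u := by
  obtain ⟨M, hM⟩ := hg
  obtain ⟨N, hN⟩ := hh
  refine ⟨M + N, fun u hu => ?_⟩
  rw [mul_add]
  exact (abs_add_le _ _).trans (add_le_add (hM u hu) (hN u hu))

end SqWeightedBounded

section Renewal

variable {φ : ℝ} {v f : ℝ → ℝ} {s : Set ℝ}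

lemma iteratedDeriv_w1_eqOn (hs : IsOpen s) (hv : EqOn (deriv v) (fun u => -φ * f u) s)
    (k : ℕ) :
    EqOn (iteratedDeriv k (w1 φ v f)) (fun u => φ * (v 0 - 1) * iteratedDeriv k f u) s := by
  have hw1 : EqOn (w1 φ v f) (fun u => φ * (v 0 - 1) * f u) s := fun u hu => by
    simp only [w1, hv hu]
    ring
  intro u hu
  rw [hw1.iteratedDeriv_of_isOpen hs k hu, iteratedDeriv_const_mul_field]

lemma iteratedDeriv_w2_eqOn (f0 v'0 : ℝ) (hs : IsOpen s)
    (hv : EqOn (deriv v) (fun u => -φ * f u) s) {k : ℕ} (hf : ContDiffOn ℝ (k + 1) f s) :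
    EqOn (iteratedDeriv k (w2 φ f0 v'0 v f))
      (fun u => φ * (φ * v 0 * f0 + v'0) * iteratedDeriv k f u
        + φ * (v 0 - 1) * iteratedDeriv (k + 1) f u) s := by
  have hw2 : EqOn (w2 φ f0 v'0 v f)
      (fun u => φ * (φ * v 0 * f0 + v'0) * f u + φ * (v 0 - 1) * deriv f u) s := fun u hu => by
    simpa only [w2, iteratedDeriv_one] using
      congrArg (φ * (φ * v 0 * f0 + v'0) * f u + ·) (iteratedDeriv_w1_eqOn hs hv 1 hu)
  intro u hu
  have hfu : ContDiffAt ℝ k f u :=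
    (hf.contDiffAt (hs.mem_nhds hu)).of_le (by norm_cast; omega)
  have hf'u : ContDiffAt ℝ k (deriv f) u :=
    (hf.deriv_of_isOpen hs le_rfl).contDiffAt (hs.mem_nhds hu)
  rw [hw2.iteratedDeriv_of_isOpen hs k hu,
    iteratedDeriv_fun_add (contDiffAt_const.mul hfu) (contDiffAt_const.mul hf'u),
    iteratedDeriv_const_mul_field, iteratedDeriv_const_mul_field, iteratedDeriv_succ']

lemma SqWeightedBounded.iteratedDeriv_w1 (hv : EqOn (deriv v) (fun u => -φ * f u) (Ioi 0))
    {k : ℕ} (hf : SqWeightedBounded (iteratedDeriv k f)) :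
    SqWeightedBounded (iteratedDeriv k (w1 φ v f)) :=
  (hf.const_mul _).congr (iteratedDeriv_w1_eqOn isOpen_Ioi hv k)

lemma SqWeightedBounded.iteratedDeriv_w2 (f0 v'0 : ℝ)
    (hv : EqOn (deriv v) (fun u => -φ * f u) (Ioi 0)) {k : ℕ}
    (hf : ContDiffOn ℝ (k + 1) f (Ioi 0)) (hk : SqWeightedBounded (iteratedDeriv k f))
    (hk' : SqWeightedBounded (iteratedDeriv (k + 1) f)) :
    SqWeightedBounded (iteratedDeriv k (w2 φ f0 v'0 v f)) :=
  ((hk.const_mul _).add (hk'.const_mul _)).congr (iteratedDeriv_w2_eqOn f0 v'0 isOpen_Ioi hv hf)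

end Renewal

theorem stmt_15_general (φ : ℝ)
    (F_X : ℝ → ℝ) (μ : ℝ)
    (hFX_c : ContinuousOn F_X (Set.Ici 0))
    (hFX_cd : ContDiffOn ℝ 3 F_X (Set.Ioi 0))
    -- (a) `X` has finite third moment
    (ha : MeasureTheory.IntegrableOn (fun u => u ^ 2 * (1 - F_X u)) (Set.Ioi 0))
    -- (b) `lim_{u↓0} F_X'(u)` exists and is finite
    (hb : ∃ L, Tendsto (deriv F_X) (𝓝[>] (0:ℝ)) (𝓝 L))
    -- (c) `I_i(F_X'') < ∞` for `i = 0, 2`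
    (hc0 : MeasureTheory.IntegrableOn (fun u => |iteratedDeriv 2 F_X u|) (Set.Ioi 0))
    (hc2 : MeasureTheory.IntegrableOn (fun u => u ^ 2 * |iteratedDeriv 2 F_X u|)
      (Set.Ioi 0))
    -- (d) weighted sup bounds for `1 - F_X` and the derivatives of `F_X`
    (hd0 : ∃ M, ∀ u : ℝ, 0 < u → |u ^ 2 * (1 - F_X u)| ≤ M)
    (hd1 : ∃ M, ∀ u : ℝ, 0 < u → |u ^ 2 * deriv F_X u| ≤ M)
    (hd2 : ∃ M, ∀ u : ℝ, 0 < u → |u ^ 2 * iteratedDeriv 2 F_X u| ≤ M)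
    (hd3 : ∃ M, ∀ u : ℝ, 0 < u → |u ^ 2 * iteratedDeriv 3 F_X u| ≤ M)
    -- the associated renewal data
    (f F v : ℝ → ℝ)
    (hf : ∀ u : ℝ, f u = (1 - F_X u) / μ)
    (hF : ∀ u : ℝ, 0 ≤ u → F u = ∫ y in (0:ℝ)..u, f y)
    (hv : ∀ u : ℝ, 0 ≤ u → v u = φ * (1 - F u))
    (v'0 : ℝ) :
    -- Condition 1: the equilibrium random variable `Z` has finite variance
    (MeasureTheory.IntegrableOn (fun u => u ^ 2 * f u) (Set.Ioi 0)) ∧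
    -- Condition 2: `F` and `v` are in `C²₀([0,∞))`
    (ContinuousOn F (Set.Ici 0) ∧ ContDiffOn ℝ 2 F (Set.Ioi 0) ∧
      (∀ k ≤ 2, ∃ L, Tendsto (iteratedDeriv k F) (𝓝[>] (0:ℝ)) (𝓝 L)) ∧
      ContinuousOn v (Set.Ici 0) ∧ ContDiffOn ℝ 2 v (Set.Ioi 0) ∧
      (∀ k ≤ 2, ∃ L, Tendsto (iteratedDeriv k v) (𝓝[>] (0:ℝ)) (𝓝 L))) ∧
    -- Condition 3: `f'` and `v''` are in `C²([0,∞))`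
    (ContDiffOn ℝ 3 f (Set.Ioi 0) ∧
      (∃ L, Tendsto (deriv f) (𝓝[>] (0:ℝ)) (𝓝 L)) ∧
      ContDiffOn ℝ 4 v (Set.Ioi 0) ∧
      (∃ L, Tendsto (iteratedDeriv 2 v) (𝓝[>] (0:ℝ)) (𝓝 L))) ∧
    -- Condition 4: `I₀(f'') < ∞` and `I₂(f'') < ∞`
    (MeasureTheory.IntegrableOn (fun u => |iteratedDeriv 2 f u|) (Set.Ioi 0) ∧
      MeasureTheory.IntegrableOn (fun u => u ^ 2 * |iteratedDeriv 2 f u|)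
        (Set.Ioi 0)) ∧
    -- Condition 5: `‖u² w₁(u)‖ < ∞` and `‖u² w₂(u)‖ < ∞`
    ((∃ M, ∀ u : ℝ, 0 < u → |u ^ 2 * w1 φ v f u| ≤ M) ∧
      (∃ M, ∀ u : ℝ, 0 < u → |u ^ 2 * w2 φ (f 0) v'0 v f u| ≤ M)) ∧
    -- Condition 6: `‖u² w₁''(u)‖ < ∞` and `‖u² w₂''(u)‖ < ∞`
    ((∃ M, ∀ u : ℝ, 0 < u → |u ^ 2 * iteratedDeriv 2 (w1 φ v f) u| ≤ M) ∧
      (∃ M, ∀ u : ℝ, 0 < u → |u ^ 2 * iteratedDeriv 2 (w2 φ (f 0) v'0 v f) u| ≤ M)) := by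
  have hf_eq : ∀ u, f u = μ⁻¹ * (1 - F_X u) := fun u => by rw [hf, div_eq_inv_mul]
  have hfk : ∀ k ≠ 0,
      EqOn (iteratedDeriv k f) (fun u => -μ⁻¹ * iteratedDeriv k F_X u) (Ioi 0) :=
    fun k => iteratedDeriv_eqOn_const_mul_const_sub isOpen_Ioi fun u _ => hf_eq u
  have hf_cd : ContDiffOn ℝ 3 f (Ioi 0) :=
    (contDiffOn_const.mul (contDiffOn_const.sub hFX_cd)).congr fun u _ => hf_eq u
  have hFX₀ : ContDiffZero 1 F_X :=
    ContDiffZero.one_of_tendsto_deriv hFX_c (hFX_cd.of_le (by norm_num)) hb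
  have hf₀ : ContDiffZero 1 f := hFX₀.const_mul_const_sub fun u _ => hf_eq u
  have hF₀ : ContDiffZero 2 F := hf₀.of_eq_primitive hF
  have hv₀ : ContDiffZero 2 v := hF₀.const_mul_const_sub hv
  have hv_cd : ContDiffOn ℝ 4 v (Ioi 0) :=
    (contDiffOn_const.mul <| contDiffOn_const.sub <|
      contDiffOn_succ_of_eq_primitive hf₀.1 hf_cd hF).congr fun u hu => hv u (le_of_lt hu)
  have hv' := deriv_eqOn_of_eq_const_mul_const_sub_primitive hf₀.1 hF hv
  have hB : ∀ k ≠ 0, SqWeightedBounded (iteratedDeriv k F_X) →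
      SqWeightedBounded (iteratedDeriv k f) := fun k hk h => (h.const_mul _).congr (hfk k hk)
  have hB0 : SqWeightedBounded (iteratedDeriv 0 f) := by
    simpa only [iteratedDeriv_zero] using
      (SqWeightedBounded.const_mul hd0 μ⁻¹).congr fun u _ => hf_eq u
  have hB1 := hB 1 one_ne_zero (by rw [iteratedDeriv_one]; exact hd1)
  have hB2 := hB 2 two_ne_zero hd2
  have hB3 := hB 3 three_ne_zero hd3
  have hw1 := hB0.iteratedDeriv_w1 hv'
  have hw2 := hB0.iteratedDeriv_w2 (f 0) v'0 hv' (hf_cd.of_le (by norm_num)) hB1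
  rw [iteratedDeriv_zero] at hw1 hw2
  have habs_f'' :
      ∀ u ∈ Ioi (0:ℝ), |μ⁻¹| * |iteratedDeriv 2 F_X u| = |iteratedDeriv 2 f u| :=
    fun u hu => by rw [hfk 2 two_ne_zero hu, abs_mul, abs_neg]
  refine ⟨IntegrableOn.congr_fun (ha.const_mul μ⁻¹) (fun u _ => by rw [hf_eq]; ring)
      measurableSet_Ioi,
    ⟨hF₀.1, hF₀.2.1, hF₀.2.2, hv₀.1, hv₀.2.1, hv₀.2.2⟩,
    ⟨hf_cd, by simpa only [iteratedDeriv_one] using hf₀.2.2 1 le_rfl, hv_cd,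
      hv₀.2.2 2 le_rfl⟩,
    ⟨IntegrableOn.congr_fun (hc0.const_mul |μ⁻¹|) habs_f'' measurableSet_Ioi,
      IntegrableOn.congr_fun (hc2.const_mul |μ⁻¹|) (fun u hu => by rw [← habs_f'' u hu]; ring)
        measurableSet_Ioi⟩,
    ⟨hw1, hw2⟩, hB2.iteratedDeriv_w1 hv', hB2.iteratedDeriv_w2 _ _ hv' hf_cd hB3⟩

/-- in the classical risk model with claim distribution `F_X`
(mean `μ > 0`, loading parameter `0 < φ < 1`) satisfying (a) `E[X³] < ∞`,
(b) `F_X'(0⁺)` exists and is finite, (c) `∫₀^∞ u^i |F_X''(u)| du < ∞` for `i = 0, 2`,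
and (d) `‖u²(1 - F_X(u))‖ < ∞`, `‖u² F_X^{(i)}(u)‖ < ∞` for `i = 1, 2, 3`,
the associated renewal data `f(u) = (1 - F_X(u))/μ`, `F(u) = ∫₀^u f`,
`v(u) = φ(1 - F(u))` satisfies conditions (1)-(6) of Proposition 2.4
(Statements 12/13). -/
theorem stmt_15 (φ : ℝ) (hφ0 : 0 < φ) (hφ1 : φ < 1)
    (F_X : ℝ → ℝ) (μ : ℝ)
    (hFX0 : F_X 0 = 0)
    (hFX_mono : MonotoneOn F_X (Set.Ici 0))
    (hFX_top : Tendsto F_X atTop (𝓝 1))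
    (hFX_c : ContinuousOn F_X (Set.Ici 0))
    (hFX_cd : ContDiffOn ℝ 3 F_X (Set.Ioi 0))
    (hμ_int : MeasureTheory.IntegrableOn (fun u => 1 - F_X u) (Set.Ioi 0))
    (hμ : μ = ∫ u in Set.Ioi (0:ℝ), (1 - F_X u))
    (hμ_pos : 0 < μ)
    -- (a) `X` has finite third moment
    (ha : MeasureTheory.IntegrableOn (fun u => u ^ 2 * (1 - F_X u)) (Set.Ioi 0))
    -- (b) `lim_{u↓0} F_X'(u)` exists and is finite
    (hb : ∃ L, Tendsto (deriv F_X) (𝓝[>] (0:ℝ)) (𝓝 L))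
    -- (c) `I_i(F_X'') < ∞` for `i = 0, 2`
    (hc0 : MeasureTheory.IntegrableOn (fun u => |iteratedDeriv 2 F_X u|) (Set.Ioi 0))
    (hc2 : MeasureTheory.IntegrableOn (fun u => u ^ 2 * |iteratedDeriv 2 F_X u|)
      (Set.Ioi 0))
    -- (d) weighted sup bounds for `1 - F_X` and the derivatives of `F_X`
    (hd0 : ∃ M, ∀ u : ℝ, 0 < u → |u ^ 2 * (1 - F_X u)| ≤ M)
    (hd1 : ∃ M, ∀ u : ℝ, 0 < u → |u ^ 2 * deriv F_X u| ≤ M)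
    (hd2 : ∃ M, ∀ u : ℝ, 0 < u → |u ^ 2 * iteratedDeriv 2 F_X u| ≤ M)
    (hd3 : ∃ M, ∀ u : ℝ, 0 < u → |u ^ 2 * iteratedDeriv 3 F_X u| ≤ M)
    -- the associated renewal data
    (f F v : ℝ → ℝ)
    (hf : ∀ u : ℝ, f u = (1 - F_X u) / μ)
    (hF : ∀ u : ℝ, 0 ≤ u → F u = ∫ y in (0:ℝ)..u, f y)
    (hv : ∀ u : ℝ, 0 ≤ u → v u = φ * (1 - F u))
    (v'0 : ℝ) (hv'0 : Tendsto (deriv v) (𝓝[>] (0:ℝ)) (𝓝 v'0)) :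
    -- Condition 1: the equilibrium random variable `Z` has finite variance
    (MeasureTheory.IntegrableOn (fun u => u ^ 2 * f u) (Set.Ioi 0)) ∧
    -- Condition 2: `F` and `v` are in `C²₀([0,∞))`
    (ContinuousOn F (Set.Ici 0) ∧ ContDiffOn ℝ 2 F (Set.Ioi 0) ∧
      (∀ k ≤ 2, ∃ L, Tendsto (iteratedDeriv k F) (𝓝[>] (0:ℝ)) (𝓝 L)) ∧
      ContinuousOn v (Set.Ici 0) ∧ ContDiffOn ℝ 2 v (Set.Ioi 0) ∧
      (∀ k ≤ 2, ∃ L, Tendsto (iteratedDeriv k v) (𝓝[>] (0:ℝ)) (𝓝 L))) ∧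
    -- Condition 3: `f'` and `v''` are in `C²([0,∞))`
    (ContDiffOn ℝ 3 f (Set.Ioi 0) ∧
      (∃ L, Tendsto (deriv f) (𝓝[>] (0:ℝ)) (𝓝 L)) ∧
      ContDiffOn ℝ 4 v (Set.Ioi 0) ∧
      (∃ L, Tendsto (iteratedDeriv 2 v) (𝓝[>] (0:ℝ)) (𝓝 L))) ∧
    -- Condition 4: `I₀(f'') < ∞` and `I₂(f'') < ∞`
    (MeasureTheory.IntegrableOn (fun u => |iteratedDeriv 2 f u|) (Set.Ioi 0) ∧
      MeasureTheory.IntegrableOn (fun u => u ^ 2 * |iteratedDeriv 2 f u|)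
        (Set.Ioi 0)) ∧
    -- Condition 5: `‖u² w₁(u)‖ < ∞` and `‖u² w₂(u)‖ < ∞`
    ((∃ M, ∀ u : ℝ, 0 < u → |u ^ 2 * w1 φ v f u| ≤ M) ∧
      (∃ M, ∀ u : ℝ, 0 < u → |u ^ 2 * w2 φ (f 0) v'0 v f u| ≤ M)) ∧
    -- Condition 6: `‖u² w₁''(u)‖ < ∞` and `‖u² w₂''(u)‖ < ∞`
    ((∃ M, ∀ u : ℝ, 0 < u → |u ^ 2 * iteratedDeriv 2 (w1 φ v f) u| ≤ M) ∧
      (∃ M, ∀ u : ℝ, 0 < u → |u ^ 2 * iteratedDeriv 2 (w2 φ (f 0) v'0 v f) u| ≤ M)) :=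
  stmt_15_general φ F_X μ hFX_c hFX_cd ha hb hc0 hc2 hd0 hd1 hd2 hd3 f F v hf hF hv v'0
end

section
/- Let X be a nonnegative random variable with distribution function F_X, finite mean μ = E[X] > 0, and Laplace–Stieltjes transform Φ_X(t) = E[e^{−tX}]. Let L be a random variable with density f_L(u) = (1−F_X(u))/μ on [0,∞), with Laplace–Stieltjes transform Φ_L(t) = E[e^{−tL}]. Then for every t > 0 and every natural number k, ((−t)^k / k!) · Φ_L^{(k)}(t) = (1/(tμ)) ( 1 − Σ_{j=0}^{k} ((−1)^j t^j / j!) Φ_X^{(j)}(t) ); equivalently, the discretization L^{•t} of L, defined by P(L^{•t} = k/t) = ((−t)^k/k!) Φ_L^{(k)}(t), satisfies P(L^{•t} = k/t) = (1/(tμ)) (1 − Σ_{j=0}^{k} ((−1)^j t^j/j!) Φ_X^{(j)}(t)). -/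
/-!
Write `w(u) = 1 - F_X(u) = P(X > u)`. By the layer-cake formula,
`t ∫₀^∞ e^{-tu} w(u) du = E[t ∫₀^X e^{-tu} du] = 1 - Φ_X(t)`, i.e. `μ t Φ_L(t) = 1 - Φ_X(t)`
for `t > 0`. Differentiating this identity `k + 1` times (Leibniz) gives
`μ (t Φ_L^{(k+1)} + (k + 1) Φ_L^{(k)}) = -Φ_X^{(k+1)}`; multiplying by `(-t)^{k+1}/(k+1)!`, the
weights `(-t)^k/k! · Φ_L^{(k)}(t)` telescope into the claimed partial sums. Smoothness of `Φ_X`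
comes from the analyticity of the moment generating function, and that of `Φ_L` from the identity.
-/

open MeasureTheory Filter Topology Real Set ProbabilityTheory
open scoped Nat ContDiff

lemma iteratedDeriv_succ_fun_id_mul {𝕜 : Type*} [NontriviallyNormedField 𝕜] {f : 𝕜 → 𝕜}
    {x : 𝕜} {n : ℕ} (hf : ContDiffAt 𝕜 (n + 1 : ℕ) f x) :
    iteratedDeriv (n + 1) (fun y => y * f y) x
      = x * iteratedDeriv (n + 1) f x + (n + 1) * iteratedDeriv n f x := by
  rw [iteratedDeriv_fun_mul (f := fun y => y) contDiffAt_fun_id hf, Finset.sum_range_succ',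
    Finset.sum_range_succ']
  simp only [iteratedDeriv_fun_id, Nat.add_eq_zero_iff, one_ne_zero, and_false, and_self,
    ↓reduceIte, Nat.add_eq_right, mul_zero, Nat.reduceSubDiff, zero_mul, Finset.sum_const_zero,
    zero_add, Nat.choose_one_right, Nat.cast_add, Nat.cast_one, mul_one, add_tsub_cancel_right,
    Nat.choose_zero_right, one_mul, tsub_zero]
  ring

lemma iteratedDeriv_succ_eq_of_mul_eq_one_sub {f g : ℝ → ℝ} {c t : ℝ}
    (hf : ContDiffAt ℝ ∞ f t) (hfg : ∀ᶠ s in 𝓝 t, c * s * f s = 1 - g s) (n : ℕ) :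
    iteratedDeriv (n + 1) g t
      = -c * (t * iteratedDeriv (n + 1) f t + (n + 1) * iteratedDeriv n f t) := by
  have hg : g =ᶠ[𝓝 t] fun s => 1 - c * (s * f s) :=
    hfg.mono fun s hs => by linarith
  rw [hg.iteratedDeriv_eq, iteratedDeriv_const_sub n.succ_pos, iteratedDeriv_neg,
    iteratedDeriv_const_mul_field,
    iteratedDeriv_succ_fun_id_mul (hf.of_le (by exact_mod_cast le_top))]
  ring

lemma mul_iteratedDeriv_eq_one_sub_sum {f g : ℝ → ℝ} {c t : ℝ}
    (hf : ContDiffAt ℝ ∞ f t) (hfg : ∀ᶠ s in 𝓝 t, c * s * f s = 1 - g s) (k : ℕ) :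
    c * t * ((-t) ^ k / k ! * iteratedDeriv k f t)
      = 1 - ∑ j ∈ Finset.range (k + 1), (-t) ^ j / j ! * iteratedDeriv j g t := by
  induction k with
  | zero => simpa using hfg.self_of_nhds
  | succ k ih =>
    rw [Finset.sum_range_succ, sub_add_eq_sub_sub, ← ih,
      iteratedDeriv_succ_eq_of_mul_eq_one_sub hf hfg, Nat.factorial_succ]
    push_cast
    field_simp
    ring

lemma integrable_exp_mul_of_nonpos {ν : Measure ℝ} [IsFiniteMeasure ν] (hν : ∀ᵐ u ∂ν, 0 ≤ u)
    {s : ℝ} (hs : s ≤ 0) : Integrable (fun u => exp (s * u)) ν :=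
  Integrable.of_bound (by fun_prop) 1 <| by
    filter_upwards [hν] with u hu
    simpa using mul_nonpos_of_nonpos_of_nonneg hs hu

lemma analyticAt_of_eq_integral_exp_neg_mul {ν : Measure ℝ} [IsFiniteMeasure ν]
    (hν : ∀ᵐ u ∂ν, 0 ≤ u) {Φ : ℝ → ℝ} (hΦ : ∀ s, 0 < s → Φ s = ∫ u, exp (-s * u) ∂ν)
    {t : ℝ} (ht : 0 < t) : AnalyticAt ℝ Φ t := by
  have hmem : -t ∈ interior (integrableExpSet id ν) :=
    interior_mono (s := Iic 0) (fun s hs => integrable_exp_mul_of_nonpos hν hs)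
      (by simpa [interior_Iic] using ht)
  refine ((analyticAt_mgf hmem).comp analyticAt_id.neg).congr ?_
  filter_upwards [Ioi_mem_nhds ht] with s hs
  simp [mgf, hΦ s hs]

lemma intervalIntegral_exp_neg_mul {t : ℝ} (ht : t ≠ 0) (x : ℝ) :
    ∫ u in (0 : ℝ)..x, exp (-t * u) = (1 - exp (-t * x)) / t := by
  rw [intervalIntegral.integral_comp_mul_left exp (neg_ne_zero.2 ht), integral_exp]
  simp only [mul_zero, exp_zero, smul_eq_mul]
  field_simp
  ring

lemma mul_integral_exp_neg_mul_measureReal_Ioi {ν : Measure ℝ} [IsFiniteMeasure ν]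
    (hν : ∀ᵐ u ∂ν, 0 ≤ u) {t : ℝ} (ht : 0 < t) :
    t * ∫ u in Ioi 0, exp (-t * u) * ν.real (Ioi u) = ν.real univ - ∫ u, exp (-t * u) ∂ν := by
  have hlayer := lintegral_comp_eq_lintegral_meas_lt_mul ν hν aemeasurable_id
    (fun r _ => (by fun_prop : Continuous fun u => exp (-t * u)).intervalIntegrable 0 r)
    (Eventually.of_forall fun u => (exp_pos _).le)
  have hleft : ∫ x, (1 - exp (-t * x)) / t ∂ν
      = (∫⁻ x, ENNReal.ofReal (∫ u in (0 : ℝ)..x, exp (-t * u)) ∂ν).toReal := by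
    rw [integral_eq_lintegral_of_nonneg_ae _ (by fun_prop)]
    · simp only [intervalIntegral_exp_neg_mul ht.ne']
    filter_upwards [hν] with x hx
    have : exp (-t * x) ≤ 1 := exp_le_one_iff.2 (by nlinarith)
    exact div_nonneg (by linarith) ht.le
  have hright : ∫ u in Ioi 0, exp (-t * u) * ν.real (Ioi u)
      = (∫⁻ u in Ioi 0, ν {a | u < a} * ENNReal.ofReal (exp (-t * u))).toReal := by
    have htail : Measurable fun u => ν.real (Ioi u) :=
      Antitone.measurable fun a b hab => measureReal_mono (Ioi_subset_Ioi hab)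
    rw [integral_eq_lintegral_of_nonneg_ae (Eventually.of_forall fun u => by positivity)
      (by fun_prop)]
    congr 1
    refine lintegral_congr fun u => ?_
    rw [ENNReal.ofReal_mul (exp_pos _).le, ofReal_measureReal, mul_comm]
    rfl
  rw [hright, ← hlayer, ← hleft, integral_div,
    integral_sub (integrable_const 1) (integrable_exp_mul_of_nonpos hν (by linarith))]
  simp only [integral_const, smul_eq_mul, mul_one, neg_mul]
  field_simp

theorem stmt_17_general (μX : MeasureTheory.Measure ℝ) [MeasureTheory.IsProbabilityMeasure μX]
    (hsupp : μX (Set.Iio 0) = 0)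
    (μ : ℝ) (hμ_pos : 0 < μ)
    (F_X : ℝ → ℝ) (hFX : ∀ u : ℝ, F_X u = (μX (Set.Iic u)).toReal)
    (ΦX ΦL : ℝ → ℝ)
    (hΦX : ∀ t : ℝ, 0 < t → ΦX t = ∫ u, Real.exp (-t * u) ∂μX)
    (hΦL : ∀ t : ℝ, 0 < t →
      ΦL t = ∫ u in Set.Ioi (0:ℝ), Real.exp (-t * u) * ((1 - F_X u) / μ)) :
    ∀ t : ℝ, 0 < t → ∀ k : ℕ,
      (-t) ^ k / (k.factorial : ℝ) * iteratedDeriv k ΦL t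
        = 1 / (t * μ) *
            (1 - ∑ j ∈ Finset.range (k + 1),
              ((-1) ^ j * t ^ j / (j.factorial : ℝ)) * iteratedDeriv j ΦX t) := by
  intro t ht k
  have hX : ∀ᵐ u ∂μX, 0 ≤ u :=
    ae_iff.2 (measure_mono_null (fun a (ha : ¬ 0 ≤ a) => not_le.1 ha) hsupp)
  have hbase : ∀ s, 0 < s → μ * s * ΦL s = 1 - ΦX s := by
    intro s hs
    have htail : ∀ u, 1 - F_X u = μX.real (Ioi u) := fun u => by
      rw [hFX, ← compl_Iic, probReal_compl_eq_one_sub measurableSet_Iic, measureReal_def]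
    have h := mul_integral_exp_neg_mul_measureReal_Ioi hX hs
    rw [probReal_univ, ← hΦX s hs] at h
    simp_rw [← h, hΦL s hs, htail, mul_div_assoc', integral_div]
    field_simp
  have hΦL_analytic : AnalyticAt ℝ ΦL t := by
    have hΦX_analytic := analyticAt_of_eq_integral_exp_neg_mul hX hΦX ht
    have h : AnalyticAt ℝ (fun s => (1 - ΦX s) / (μ * s)) t :=
      (analyticAt_const.fun_sub hΦX_analytic).fun_div (analyticAt_const.fun_mul analyticAt_id)
        (mul_pos hμ_pos ht).ne'
    refine h.congr ?_
    filter_upwards [Ioi_mem_nhds ht] with s hs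
    rw [← hbase s hs, mul_div_cancel_left₀ _ (mul_pos hμ_pos hs).ne']
  have h := mul_iteratedDeriv_eq_one_sub_sum hΦL_analytic.contDiffAt
    (eventually_of_mem (Ioi_mem_nhds ht) hbase) k
  simp only [← neg_pow, ← h]
  field_simp

/-- let `X` be a nonnegative random variable (law `μX`) with finite
mean `μ > 0`, Laplace–Stieltjes transform `ΦX`, and let `L` have the equilibrium
density `(1 - F_X(u))/μ`, with Laplace–Stieltjes transform `ΦL`.  Then for every
`t > 0` and `k ∈ ℕ`,
`((-t)^k/k!) ΦL^{(k)}(t) = (1/(tμ)) (1 - ∑_{j=0}^k ((-1)^j t^j/j!) ΦX^{(j)}(t))`;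
i.e. the weights `P(L^{•t} = k/t)` of the discretization of `L` are given by the
right-hand side. -/
theorem stmt_17 (μX : MeasureTheory.Measure ℝ) [MeasureTheory.IsProbabilityMeasure μX]
    (hsupp : μX (Set.Iio 0) = 0)
    (hint : MeasureTheory.Integrable id μX)
    (μ : ℝ) (hμ : μ = ∫ u, u ∂μX) (hμ_pos : 0 < μ)
    (F_X : ℝ → ℝ) (hFX : ∀ u : ℝ, F_X u = (μX (Set.Iic u)).toReal)
    (ΦX ΦL : ℝ → ℝ)
    (hΦX : ∀ t : ℝ, 0 < t → ΦX t = ∫ u, Real.exp (-t * u) ∂μX)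
    (hΦL : ∀ t : ℝ, 0 < t →
      ΦL t = ∫ u in Set.Ioi (0:ℝ), Real.exp (-t * u) * ((1 - F_X u) / μ)) :
    ∀ t : ℝ, 0 < t → ∀ k : ℕ,
      (-t) ^ k / (k.factorial : ℝ) * iteratedDeriv k ΦL t
        = 1 / (t * μ) *
            (1 - ∑ j ∈ Finset.range (k + 1),
              ((-1) ^ j * t ^ j / (j.factorial : ℝ)) * iteratedDeriv j ΦX t) :=
  stmt_17_general μX hsupp μ hμ_pos F_X hFX ΦX ΦL hΦX hΦL
end

section
/- Let X be a Gamma(α, β) random variable with α > 0, β > 0, and let L have the equilibrium density f_L(u) = (1−F_X(u))/μ with μ = α/β. Then for every t > 0 and every natural number k, ((−t)^k/k!) Φ_L^{(k)}(t) = (β/(tα)) ( 1 − Σ_{j=0}^{k} (Γ(α+j)/(Γ(α) j!)) (t/(t+β))^j (β/(t+β))^α ); that is, P(L^{•t} = k/t) = (β/(tα)) (1 − CDF.NB(k; α, β/(t+β))), where CDF.NB(k; α, ρ) = Σ_{j=0}^{k} (Γ(α+j)/(Γ(α) j!)) (1−ρ)^j ρ^α is the cumulative distribution function at k of a negative binomial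 distribution with α 'successes' and success probability ρ. -/
open MeasureTheory Filter Topology

/-- The distribution function of a `Gamma(a, b)` random variable
(`a` shape, `b` rate): `∫₀^u b^a y^{a-1} e^{-by} / Γ(a) dy`. -/
noncomputable def gammaCDF (a b : ℝ) (u : ℝ) : ℝ :=
  ∫ y in (0:ℝ)..u, b ^ a * y ^ (a - 1) * Real.exp (-b * y) / Real.Gamma a

open Set Real ProbabilityTheory
open scoped Nat

/-!
Since `1 - F_X(u) = ∫_u^∞ f_X`, integrating by parts gives
`Φ_L(t) = (β/α) (1 - Φ_X(t)) / t` with `Φ_X(t) = ρ^α`, `ρ = β/(t+β)`.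
The negative binomial probabilities `P_j(ρ)` satisfy
`ρ (1 - ρ) P_j'(ρ) = (j+1) P_{j+1}(ρ) - j P_j(ρ)`, so their partial sums telescope to
`ρ (1 - ρ) F_k'(ρ) = (k+1) P_{k+1}(ρ)`. As `t ρ'(t) = -ρ (1 - ρ)`, the functions
`G_k(t) = (1 - F_k(ρ(t))) / t^(k+1)` satisfy `G_k' = -(k+1) G_{k+1}`, and `Φ_L = (β/α) G_0`;
hence `Φ_L^(k) = (β/α) (-1)^k k! G_k`.
-/

section Primitive

variable {f : ℝ → ℝ} {a : ℝ}

lemma continuousWithinAt_Ici_primitive (hf : IntegrableOn f (Ioi a)) :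
    ContinuousWithinAt (fun b ↦ ∫ x in a..b, f x) (Ici a) a := by
  have hint : IntervalIntegrable f volume (min a a) (max a (a + 1)) := by
    rw [min_self, max_eq_right (by linarith),
      intervalIntegrable_iff_integrableOn_Ioc_of_le (by linarith)]
    exact hf.mono_set Ioc_subset_Ioi_self
  exact (intervalIntegral.continuousWithinAt_primitive (measure_singleton a) hint)
    |>.mono_of_mem_nhdsWithin (Icc_mem_nhdsGE (by linarith))

lemma hasDerivAt_primitive_of_continuousOn_Ioi (hf : IntegrableOn f (Ioi a))
    (hfc : ContinuousOn f (Ioi a)) {x : ℝ} (hx : a < x) :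
    HasDerivAt (fun b ↦ ∫ y in a..b, f y) (f x) x :=
  intervalIntegral.integral_hasDerivAt_right
    ((intervalIntegrable_iff_integrableOn_Ioc_of_le hx.le).2 (hf.mono_set Ioc_subset_Ioi_self))
    (hfc.stronglyMeasurableAtFilter isOpen_Ioi x hx) (hfc.continuousAt (isOpen_Ioi.mem_nhds hx))

end Primitive

theorem integral_exp_neg_mul_mul_sub_primitive {f : ℝ → ℝ} (hf : IntegrableOn f (Ioi 0))
    (hfc : ContinuousOn f (Ioi 0)) (hf0 : ∀ y ∈ Ioi (0 : ℝ), 0 ≤ f y) {t : ℝ} (ht : 0 < t) :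
    ∫ u in Ioi 0, exp (-t * u) * ((∫ y in Ioi 0, f y) - ∫ y in (0)..u, f y)
      = ((∫ y in Ioi 0, f y) - ∫ y in Ioi 0, exp (-t * y) * f y) / t := by
  set m := ∫ y in Ioi 0, f y
  set L := ∫ y in Ioi 0, exp (-t * y) * f y
  set F := fun u ↦ ∫ y in (0)..u, f y
  set H := fun u ↦ ∫ y in (0)..u, exp (-t * y) * f y
  have hexp : Continuous fun y ↦ exp (-t * y) := by fun_prop
  have hg : IntegrableOn (fun y ↦ exp (-t * y) * f y) (Ioi 0) := by
    refine hf.bdd_mul (c := 1) hexp.aestronglyMeasurable ?_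
    filter_upwards [ae_restrict_mem measurableSet_Ioi] with y (hy : 0 < y)
    rw [norm_of_nonneg (exp_pos _).le, exp_le_one_iff]
    nlinarith
  have hgc : ContinuousOn (fun y ↦ exp (-t * y) * f y) (Ioi 0) := hexp.continuousOn.mul hfc
  have hF_le : ∀ u ∈ Ioi (0 : ℝ), F u ≤ m := fun u hu ↦ by
    simp only [F, intervalIntegral.integral_of_le (le_of_lt hu)]
    exact setIntegral_mono_set hf ((ae_restrict_iff' measurableSet_Ioi).2 (ae_of_all _ hf0))
      Ioc_subset_Ioi_self.eventuallyLE
  -- a primitive of `u ↦ exp (-t u) (m - F u)`, found by integrating by parts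
  let G u := -(exp (-t * u) / t) * (m - F u) - H u / t
  have hG0 : ContinuousWithinAt G (Ici 0) 0 :=
    ((hexp.div_const t).neg.continuousWithinAt.mul
      (continuousWithinAt_const.sub (continuousWithinAt_Ici_primitive hf))).sub
      ((continuousWithinAt_Ici_primitive hg).div_const t)
  have hG' : ∀ u ∈ Ioi (0 : ℝ), HasDerivAt G (exp (-t * u) * (m - F u)) u := by
    intro u hu
    have hE : HasDerivAt (fun u ↦ -(exp (-t * u) / t)) (exp (-t * u)) u :=
      (((hasDerivAt_id u).const_mul (-t)).exp.div_const t).fun_neg.congr_deriv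
        (by simp only [id]; field_simp)
    have hF := (hasDerivAt_primitive_of_continuousOn_Ioi hf hfc hu).const_sub m
    have hH := (hasDerivAt_primitive_of_continuousOn_Ioi hg hgc hu).div_const t
    exact ((hE.fun_mul hF).fun_sub hH).congr_deriv (by ring)
  have hGlim : Tendsto G atTop (𝓝 (-(L / t))) := by
    have hexp0 : Tendsto (fun u ↦ exp (-t * u)) atTop (𝓝 0) :=
      tendsto_exp_atBot.comp (tendsto_id.const_mul_atTop_of_neg (by linarith))
    have h := ((hexp0.div_const t).neg.mul ((tendsto_const_nhds (x := m)).sub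
      (intervalIntegral_tendsto_integral_Ioi 0 hf tendsto_id))).sub
      ((intervalIntegral_tendsto_integral_Ioi 0 hg tendsto_id).div_const t)
    rwa [zero_div, neg_zero, zero_mul, zero_sub] at h
  rw [integral_Ioi_of_hasDerivAt_of_nonneg hG0 hG' (fun u hu ↦ mul_nonneg (exp_pos _).le
    (sub_nonneg.2 (hF_le u hu))) hGlim]
  simp only [G, F, H, intervalIntegral.integral_same, mul_zero, exp_zero]
  ring

section GammaPDF

variable {a r : ℝ}

lemma exp_neg_mul_mul_gammaPDFReal (t : ℝ) {y : ℝ} (hy : 0 ≤ y) :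
    exp (-t * y) * gammaPDFReal a r y = r ^ a / Gamma a * (y ^ (a - 1) * exp (-(t + r) * y)) := by
  rw [gammaPDFReal, if_pos hy, neg_add, add_mul, exp_add, neg_mul r]
  ring

lemma integrableOn_gammaPDFReal (ha : 0 < a) (hr : 0 < r) :
    IntegrableOn (gammaPDFReal a r) (Ioi 0) := by
  have h : IntegrableOn (fun y ↦ r ^ a / Gamma a * (y ^ (a - 1) * exp (-r * y ^ (1 : ℝ))))
      (Ioi 0) := (integrableOn_rpow_mul_exp_neg_mul_rpow (by linarith) one_pos hr).const_mul _
  refine h.congr_fun (fun y hy ↦ ?_) measurableSet_Ioi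
  simpa [rpow_one] using (exp_neg_mul_mul_gammaPDFReal 0 (le_of_lt hy)).symm

lemma continuousOn_gammaPDFReal : ContinuousOn (gammaPDFReal a r) (Ioi 0) :=
  ((continuousOn_const.mul (continuousOn_id.rpow_const fun _ hy ↦ Or.inl (ne_of_gt hy))).mul
    (by fun_prop)).congr fun _ hy ↦ if_pos (le_of_lt hy)

lemma integral_exp_neg_mul_mul_gammaPDFReal (ha : 0 < a) (hr : 0 ≤ r) {t : ℝ} (htr : 0 < t + r) :
    ∫ y in Ioi 0, exp (-t * y) * gammaPDFReal a r y = (r / (t + r)) ^ a := by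
  rw [setIntegral_congr_fun measurableSet_Ioi
    fun y hy ↦ exp_neg_mul_mul_gammaPDFReal t (le_of_lt hy), integral_const_mul]
  simp_rw [neg_mul]
  rw [integral_rpow_mul_exp_neg_mul_Ioi ha htr, div_rpow hr htr.le, one_div, inv_rpow htr.le]
  field_simp [(Gamma_pos_of_pos ha).ne']

lemma integral_gammaPDFReal_Ioi (ha : 0 < a) (hr : 0 < r) :
    ∫ y in Ioi 0, gammaPDFReal a r y = 1 := by
  simpa [div_self hr.ne'] using integral_exp_neg_mul_mul_gammaPDFReal ha hr.le (t := 0) (by simpa)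

lemma gammaCDF_eq_integral_gammaPDFReal {u : ℝ} (hu : 0 ≤ u) :
    gammaCDF a r u = ∫ y in (0)..u, gammaPDFReal a r y := by
  refine intervalIntegral.integral_congr fun y hy ↦ ?_
  rw [uIcc_of_le hu] at hy
  simp only [gammaPDFReal, if_pos hy.1, neg_mul]
  ring

theorem integral_exp_neg_mul_mul_one_sub_gammaCDF (ha : 0 < a) (hr : 0 < r) {t : ℝ}
    (ht : 0 < t) :
    ∫ u in Ioi 0, exp (-t * u) * (1 - gammaCDF a r u) = (1 - (r / (t + r)) ^ a) / t := by
  have h := integral_exp_neg_mul_mul_sub_primitive (integrableOn_gammaPDFReal ha hr)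
    continuousOn_gammaPDFReal (fun y _ ↦ gammaPDFReal_nonneg ha hr y) ht
  rw [integral_gammaPDFReal_Ioi ha hr,
    integral_exp_neg_mul_mul_gammaPDFReal ha hr.le (by linarith)] at h
  rw [← h]
  exact setIntegral_congr_fun measurableSet_Ioi fun u hu ↦ by
    rw [gammaCDF_eq_integral_gammaPDFReal (le_of_lt hu)]

end GammaPDF

-- `P(N = j)` for `N` the number of failures before the `α`-th success, success probability `ρ`
noncomputable def negBinomialPMF (α ρ : ℝ) (j : ℕ) : ℝ :=
  Gamma (α + j) / (Gamma α * j !) * (1 - ρ) ^ j * ρ ^ α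

noncomputable def negBinomialCDF (α ρ : ℝ) (k : ℕ) : ℝ :=
  ∑ j ∈ Finset.range (k + 1), negBinomialPMF α ρ j

section NegBinomial

variable {α ρ : ℝ}

lemma negBinomialCDF_zero (hα : 0 < α) : negBinomialCDF α ρ 0 = ρ ^ α := by
  simp [negBinomialCDF, negBinomialPMF, (Gamma_pos_of_pos hα).ne']

lemma negBinomialCDF_succ (k : ℕ) :
    negBinomialCDF α ρ (k + 1) = negBinomialCDF α ρ k + negBinomialPMF α ρ (k + 1) :=
  Finset.sum_range_succ _ _

lemma succ_mul_negBinomialPMF_succ (hα : 0 < α) (j : ℕ) :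
    (j + 1) * negBinomialPMF α ρ (j + 1) = (α + j) * (1 - ρ) * negBinomialPMF α ρ j := by
  have hΓ := (Gamma_pos_of_pos hα).ne'
  have hαj : α + j ≠ 0 := by positivity
  rw [negBinomialPMF, negBinomialPMF, Nat.cast_succ, ← add_assoc, Gamma_add_one hαj,
    Nat.factorial_succ, pow_succ]
  push_cast
  field_simp

lemma hasDerivAt_negBinomialPMF (hα : 0 < α) (hρ : 0 < ρ) (hρ1 : ρ ≠ 1) (j : ℕ) :
    HasDerivAt (fun ρ ↦ negBinomialPMF α ρ j)
      (((j + 1) * negBinomialPMF α ρ (j + 1) - j * negBinomialPMF α ρ j) / (ρ * (1 - ρ))) ρ := by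
  have h1ρ : 1 - ρ ≠ 0 := sub_ne_zero.2 hρ1.symm
  have hpow := (((hasDerivAt_id ρ).const_sub 1).fun_pow j).const_mul
    (Gamma (α + j) / (Gamma α * j !))
  refine (hpow.mul (hasDerivAt_rpow_const (p := α) (Or.inl hρ.ne'))).congr_deriv ?_
  rw [succ_mul_negBinomialPMF_succ hα, negBinomialPMF, rpow_sub_one hρ.ne']
  cases j with
  | zero =>
    simp only [CharP.cast_eq_zero, Nat.factorial_zero, Nat.cast_one, pow_zero, mul_zero, zero_mul,
      zero_add, sub_zero, mul_one, add_zero]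
    field_simp
  | succ n =>
    simp only [id, Nat.add_sub_cancel, pow_succ]
    push_cast
    field_simp
    ring

lemma hasDerivAt_negBinomialCDF (hα : 0 < α) (hρ : 0 < ρ) (hρ1 : ρ ≠ 1) (k : ℕ) :
    HasDerivAt (fun ρ ↦ negBinomialCDF α ρ k)
      ((k + 1) * negBinomialPMF α ρ (k + 1) / (ρ * (1 - ρ))) ρ := by
  refine (HasDerivAt.fun_sum fun j _ ↦ hasDerivAt_negBinomialPMF hα hρ hρ1 j).congr_deriv ?_
  have htel := Finset.sum_range_sub (fun j : ℕ ↦ (j : ℝ) * negBinomialPMF α ρ j) (k + 1)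
  push_cast at htel
  rw [← Finset.sum_div, htel]
  ring

end NegBinomial

theorem eqOn_iteratedDeriv_of_hasDerivAt {𝕜 F : Type*} [NontriviallyNormedField 𝕜]
    [NormedAddCommGroup F] [NormedSpace 𝕜 F] {g : 𝕜 → F} {f : ℕ → 𝕜 → F} {U : Set 𝕜}
    (hU : IsOpen U) (hg : EqOn g (f 0) U) (hf : ∀ k, ∀ x ∈ U, HasDerivAt (f k) (f (k + 1) x) x)
    (k : ℕ) : EqOn (iteratedDeriv k g) (f k) U := by
  induction k with
  | zero => simpa using hg
  | succ k ih =>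
    intro x hx
    rw [iteratedDeriv_succ, EventuallyEq.deriv_eq (eventually_of_mem (hU.mem_nhds hx) ih)]
    exact (hf k x hx).deriv

lemma hasDerivAt_one_sub_negBinomialCDF_div_pow {α β : ℝ} (hα : 0 < α) (hβ : 0 < β) {s : ℝ}
    (hs : 0 < s) (k : ℕ) :
    HasDerivAt (fun s ↦ (1 - negBinomialCDF α (β / (s + β)) k) / s ^ (k + 1))
      (-(k + 1) * ((1 - negBinomialCDF α (β / (s + β)) (k + 1)) / s ^ (k + 2))) s := by
  have hsβ : 0 < s + β := by linarith
  have hρ : 0 < β / (s + β) := div_pos hβ hsβ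
  have hρ1 : β / (s + β) ≠ 1 := ((div_lt_one hsβ).2 (by linarith)).ne
  have h1ρ : 1 - β / (s + β) = s / (s + β) := by field_simp; ring
  have hρ' : HasDerivAt (fun s ↦ β / (s + β)) (-(β / (s + β) * (1 - β / (s + β))) / s) s :=
    (((hasDerivAt_id s).add_const β).inv hsβ.ne').const_mul β |>.congr_deriv (by
      rw [h1ρ]; simp only [id]; field_simp)
  refine ((((hasDerivAt_negBinomialCDF hα hρ hρ1 k).comp s hρ').const_sub 1).div
    (hasDerivAt_pow (k + 1) s) (pow_ne_zero _ hs.ne')).congr_deriv ?_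
  have hρρ : β / (s + β) * (1 - β / (s + β)) ≠ 0 :=
    mul_ne_zero hρ.ne' (sub_ne_zero.2 hρ1.symm)
  rw [Function.comp_apply, negBinomialCDF_succ, Nat.add_sub_cancel]
  generalize β / (s + β) * (1 - β / (s + β)) = q at hρρ ⊢
  push_cast
  field_simp
  ring

/-- let `X` be a `Gamma(α, β)` random variable (`α, β > 0`, mean
`μ = α/β`) and let `L` have the equilibrium density `(1 - F_X(u))/μ`, with
Laplace–Stieltjes transform `ΦL`.  Then for every `t > 0` and `k ∈ ℕ`,
`((-t)^k/k!) ΦL^{(k)}(t)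
  = (β/(tα)) (1 - ∑_{j=0}^k (Γ(α+j)/(Γ(α) j!)) (t/(t+β))^j (β/(t+β))^α)`,
i.e. `P(L^{•t} = k/t) = (β/(tα)) (1 - CDF.NB(k; α, β/(t+β)))`. -/
theorem stmt_19 (α β : ℝ) (hα : 0 < α) (hβ : 0 < β)
    (F_X : ℝ → ℝ) (hFX : ∀ u : ℝ, 0 ≤ u → F_X u = gammaCDF α β u)
    (ΦL : ℝ → ℝ)
    (hΦL : ∀ t : ℝ, 0 < t →
      ΦL t = ∫ u in Set.Ioi (0:ℝ), Real.exp (-t * u) * ((1 - F_X u) / (α / β))) :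
    ∀ t : ℝ, 0 < t → ∀ k : ℕ,
      (-t) ^ k / (k.factorial : ℝ) * iteratedDeriv k ΦL t
        = β / (t * α) *
            (1 - ∑ j ∈ Finset.range (k + 1),
              Real.Gamma (α + j) / (Real.Gamma α * (j.factorial : ℝ))
                * (t / (t + β)) ^ j * (β / (t + β)) ^ α) := by
  intro t ht k
  let G (k : ℕ) (s : ℝ) : ℝ :=
    β / α * ((-1) ^ k * k ! * ((1 - negBinomialCDF α (β / (s + β)) k) / s ^ (k + 1)))
  have hΦG : EqOn ΦL (G 0) (Ioi 0) := fun s hs ↦ by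
    have hintegrand : ∀ u ∈ Ioi (0 : ℝ), exp (-s * u) * ((1 - F_X u) / (α / β))
        = β / α * (exp (-s * u) * (1 - gammaCDF α β u)) := fun u hu ↦ by
      rw [hFX u (le_of_lt hu)]
      field_simp
    rw [hΦL s hs, setIntegral_congr_fun measurableSet_Ioi hintegrand, integral_const_mul,
      integral_exp_neg_mul_mul_one_sub_gammaCDF hα hβ hs]
    simp [G, negBinomialCDF_zero hα]
  have hG : ∀ k, ∀ s ∈ Ioi (0 : ℝ), HasDerivAt (G k) (G (k + 1) s) s := fun k s hs ↦
    (((hasDerivAt_one_sub_negBinomialCDF_div_pow hα hβ hs k).const_mul _).const_mul _).congr_deriv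
      (by simp only [G, Nat.factorial_succ]; push_cast; ring)
  have hCDF : ∑ j ∈ Finset.range (k + 1), Gamma (α + j) / (Gamma α * j !)
      * (t / (t + β)) ^ j * (β / (t + β)) ^ α = negBinomialCDF α (β / (t + β)) k :=
    Finset.sum_congr rfl fun j _ ↦ by
      rw [negBinomialPMF, one_sub_div (by linarith), add_sub_cancel_right]
  have hsign : (-t) ^ k * (-1) ^ k = t ^ k := by rw [← mul_pow]; simp
  rw [eqOn_iteratedDeriv_of_hasDerivAt isOpen_Ioi hΦG hG k ht, hCDF]
  simp only [G]
  generalize 1 - negBinomialCDF α (β / (t + β)) k = C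
  calc (-t) ^ k / k ! * (β / α * ((-1) ^ k * k ! * (C / t ^ (k + 1))))
      = (-t) ^ k * (-1) ^ k * β * C / (α * t ^ (k + 1)) := by field_simp
    _ = β / (t * α) * C := by rw [hsign, pow_succ]; field_simp
end
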